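/- arXiv:1903.05056 — 3 statements merged into one kernel-verified Lean document; each statement's English description precedes it below -/
import Mathlib

section
/- Let σ : [0,S] → [0,S̃] be a strictly increasing, surjective, bi-Lipschitz function and let (S̃, w̃⁰, w̃, α̃, ỹ⁰, ỹ, β̃) be a space-time process. Define (w⁰,w)(s) := ((w̃⁰, w̃) ∘ σ)(s) · σ'(s) and (α, y⁰, y, β) := (α̃, ỹ⁰, ỹ, β̃) ∘ σ. Then (S, w⁰, w, α, y⁰, y, β) is a space-time process; it is feasible if and only if (S̃, w̃⁰, w̃, α̃, ỹ⁰, ỹ, β̃) is feasible; the costs of the two processes coincide; and (S̃, w̃⁰, w̃, α̃, ỹ⁰, ỹ, β̃) is a local (respectively, global) minimizer of the space-time problem if and only if (S, w⁰, w, α, y⁰, y, β) is a local (respectively, global) minimizer. -/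
open MeasureTheory Set Filter Asymptotics Topology
noncomputable section

/-- `ℝ^n` with the Euclidean structure. -/
abbrev Vec (n : ℕ) := EuclideanSpace ℝ (Fin n)

/-- A convex cone (not necessarily containing `0`). -/
def IsConvexCone {E : Type*} [AddCommGroup E] [Module ℝ E] (K : Set E) : Prop :=
  Convex ℝ K ∧ ∀ ⦃c : ℝ⦄, 0 < c → ∀ ⦃x⦄, x ∈ K → c • x ∈ K

/-- `K` is a Boltyanski approximating cone for `Z` at `z`. -/
def IsBoltyanskiCone {E : Type*} [NormedAddCommGroup E] [NormedSpace ℝ E]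
    (Z : Set E) (z : E) (K : Set E) : Prop :=
  IsConvexCone K ∧
  ∃ (M : ℕ) (C : Set (Vec M)) (V : Set (Vec M)) (F : Vec M → E) (L : Vec M →ₗ[ℝ] E),
    IsConvexCone C ∧ V ∈ 𝓝 (0 : Vec M) ∧
    ContinuousOn F (V ∩ C) ∧ (∀ v ∈ V ∩ C, F v ∈ Z) ∧ F 0 = z ∧
    (fun v => F v - F 0 - L v) =o[𝓝[V ∩ C] 0] (fun v => ‖v‖) ∧
    L '' C = K

variable {n m q : ℕ}

/-- The extended (space-time) dynamics
`Fᵉ(x, w⁰, w, a) = w⁰ f(x,a) + Σᵢ wⁱ gᵢ(x)`. -/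
def Fe (f : Vec n → Vec q → Vec n) (g : Fin m → Vec n → Vec n)
    (x : Vec n) (w0 : ℝ) (w : Vec m) (a : Vec q) : Vec n :=
  w0 • f x a + ∑ i, w i • g i x

/-- The extended Lagrangian `ℓᵉ(x, w⁰, w, a) = ℓ₀(x,a) w⁰ + ℓ̂₁(x, w⁰, w)`. -/
def extL (ℓ0 : Vec n → Vec q → ℝ) (ℓhat1 : Vec n → ℝ → Vec m → ℝ)
    (x : Vec n) (w0 : ℝ) (w : Vec m) (a : Vec q) : ℝ :=
  ℓ0 x a * w0 + ℓhat1 x w0 w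

/-- `ℓ̂₁` is the recession function of `ℓ₁`:
`ℓ̂₁(x, w⁰, w) = lim_{r → w⁰, r > 0} r ℓ₁(x, w/r)`. -/
def IsRecessionOf (C : Set (Vec m)) (ℓhat1 : Vec n → ℝ → Vec m → ℝ)
    (ℓ1 : Vec n → Vec m → ℝ) : Prop :=
  ∀ x : Vec n, ∀ w0 : ℝ, 0 ≤ w0 → ∀ w ∈ C,
    Tendsto (fun r : ℝ => r * ℓ1 x (r⁻¹ • w)) (𝓝[Set.Ioi (0:ℝ)] w0) (𝓝 (ℓhat1 x w0 w))

/-- A space-time process of the extended control system. -/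
structure IsSTProcess (C : Set (Vec m)) (A : Set (Vec q))
    (f : Vec n → Vec q → Vec n) (g : Fin m → Vec n → Vec n) (xck : Vec n)
    (S : ℝ) (w0 : ℝ → ℝ) (w : ℝ → Vec m) (α : ℝ → Vec q)
    (y0 : ℝ → ℝ) (y : ℝ → Vec n) (β : ℝ → ℝ) : Prop where
  hS : 0 < S
  meas_w0 : AEMeasurable w0 (volume.restrict (Icc (0:ℝ) S))
  meas_w : AEStronglyMeasurable w (volume.restrict (Icc (0:ℝ) S))
  meas_α : AEStronglyMeasurable α (volume.restrict (Icc (0:ℝ) S))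
  ess_bdd : ∃ M : ℝ, ∀ᵐ s ∂(volume.restrict (Icc (0:ℝ) S)), |w0 s| + ‖w s‖ ≤ M
  mem_ae : ∀ᵐ s ∂(volume.restrict (Icc (0:ℝ) S)), 0 ≤ w0 s ∧ w s ∈ C ∧ α s ∈ A
  essinf_pos : ∃ c : ℝ, 0 < c ∧ ∀ᵐ s ∂(volume.restrict (Icc (0:ℝ) S)), c ≤ w0 s + ‖w s‖
  int_w0 : IntervalIntegrable w0 volume 0 S
  int_F : IntervalIntegrable (fun t => Fe f g (y t) (w0 t) (w t) (α t)) volume 0 S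
  int_w : IntervalIntegrable (fun t => ‖w t‖) volume 0 S
  sol_y0 : ∀ s ∈ Icc (0:ℝ) S, y0 s = ∫ t in (0:ℝ)..s, w0 t
  sol_y : ∀ s ∈ Icc (0:ℝ) S, y s = xck + ∫ t in (0:ℝ)..s, Fe f g (y t) (w0 t) (w t) (α t)
  sol_β : ∀ s ∈ Icc (0:ℝ) S, β s = ∫ t in (0:ℝ)..s, ‖w t‖

/-- Feasibility of a space-time process: final space-time point in the target, and
total variation bounded by `K`. -/
def STFeasible (Tgt : Set (ℝ × Vec n)) (K : EReal)
    (S : ℝ) (y0 : ℝ → ℝ) (y : ℝ → Vec n) (β : ℝ → ℝ) : Prop :=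
  (y0 S, y S) ∈ Tgt ∧ ((β S : ℝ) : EReal) ≤ K

/-- The cost of a space-time process. -/
def STCost (Ψ : ℝ → Vec n → ℝ) (ℓ0 : Vec n → Vec q → ℝ) (ℓhat1 : Vec n → ℝ → Vec m → ℝ)
    (S : ℝ) (w0 : ℝ → ℝ) (w : ℝ → Vec m) (α : ℝ → Vec q)
    (y0 : ℝ → ℝ) (y : ℝ → Vec n) : ℝ :=
  Ψ (y0 S) (y S) + ∫ s in (0:ℝ)..S, extL ℓ0 ℓhat1 (y s) (w0 s) (w s) (α s)

/-- The continuous constant extension of a path on `[0,S]` evaluated at `t`. -/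
def clampT (S t : ℝ) : ℝ := max 0 (min t S)

/-- The distance `d((S₁,z₁),(S₂,z₂)) = |S₁−S₂| + ‖z̃₁−z̃₂‖_∞`, where tildes denote
continuous constant extensions. -/
def dProc {E : Type*} [PseudoMetricSpace E] (S₁ : ℝ) (z₁ : ℝ → E) (S₂ : ℝ) (z₂ : ℝ → E) : ℝ :=
  |S₁ - S₂| + ⨆ t : ℝ, dist (z₁ (clampT S₁ t)) (z₂ (clampT S₂ t))

/-- Local minimizer of the space-time problem. -/
def IsSTLocalMin (C : Set (Vec m)) (A : Set (Vec q))
    (f : Vec n → Vec q → Vec n) (g : Fin m → Vec n → Vec n) (xck : Vec n)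
    (Tgt : Set (ℝ × Vec n)) (K : EReal) (Ψ : ℝ → Vec n → ℝ)
    (ℓ0 : Vec n → Vec q → ℝ) (ℓhat1 : Vec n → ℝ → Vec m → ℝ)
    (S : ℝ) (w0 : ℝ → ℝ) (w : ℝ → Vec m) (α : ℝ → Vec q)
    (y0 : ℝ → ℝ) (y : ℝ → Vec n) (β : ℝ → ℝ) : Prop :=
  IsSTProcess C A f g xck S w0 w α y0 y β ∧ STFeasible Tgt K S y0 y β ∧
  ∃ δ : ℝ, 0 < δ ∧ ∀ (S' : ℝ) (w0' : ℝ → ℝ) (w' : ℝ → Vec m) (α' : ℝ → Vec q)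
      (y0' : ℝ → ℝ) (y' : ℝ → Vec n) (β' : ℝ → ℝ),
    IsSTProcess C A f g xck S' w0' w' α' y0' y' β' →
    STFeasible Tgt K S' y0' y' β' →
    dProc S (fun s => (y0 s, y s, β s)) S' (fun s => (y0' s, y' s, β' s)) < δ →
    STCost Ψ ℓ0 ℓhat1 S w0 w α y0 y ≤ STCost Ψ ℓ0 ℓhat1 S' w0' w' α' y0' y'

/-- Global minimizer of the space-time problem. -/
def IsSTGlobalMin (C : Set (Vec m)) (A : Set (Vec q))
    (f : Vec n → Vec q → Vec n) (g : Fin m → Vec n → Vec n) (xck : Vec n)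
    (Tgt : Set (ℝ × Vec n)) (K : EReal) (Ψ : ℝ → Vec n → ℝ)
    (ℓ0 : Vec n → Vec q → ℝ) (ℓhat1 : Vec n → ℝ → Vec m → ℝ)
    (S : ℝ) (w0 : ℝ → ℝ) (w : ℝ → Vec m) (α : ℝ → Vec q)
    (y0 : ℝ → ℝ) (y : ℝ → Vec n) (β : ℝ → ℝ) : Prop :=
  IsSTProcess C A f g xck S w0 w α y0 y β ∧ STFeasible Tgt K S y0 y β ∧
  ∀ (S' : ℝ) (w0' : ℝ → ℝ) (w' : ℝ → Vec m) (α' : ℝ → Vec q)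
      (y0' : ℝ → ℝ) (y' : ℝ → Vec n) (β' : ℝ → ℝ),
    IsSTProcess C A f g xck S' w0' w' α' y0' y' β' →
    STFeasible Tgt K S' y0' y' β' →
    STCost Ψ ℓ0 ℓhat1 S w0 w α y0 y ≤ STCost Ψ ℓ0 ℓhat1 S' w0' w' α' y0' y'

/-- Canonical process: `w⁰ + |w| = 1` a.e. on `[0,S]`. -/
def STCanonical (S : ℝ) (w0 : ℝ → ℝ) (w : ℝ → Vec m) : Prop :=
  ∀ᵐ s ∂(volume.restrict (Icc (0:ℝ) S)), w0 s + ‖w s‖ = 1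

/-- The unmaximized Hamiltonian `H`. -/
def Ham (f : Vec n → Vec q → Vec n) (g : Fin m → Vec n → Vec n)
    (ℓ0 : Vec n → Vec q → ℝ) (ℓhat1 : Vec n → ℝ → Vec m → ℝ)
    (x : Vec n) (p0 : ℝ) (p : Vec n) (pi lam : ℝ)
    (w0 : ℝ) (w : Vec m) (a : Vec q) : ℝ :=
  p0 * w0 + (inner ℝ p (Fe f g x w0 w a) : ℝ) + pi * ‖w‖
    - lam * extL ℓ0 ℓhat1 x w0 w a

/-- The maximized Hamiltonian `𝐇`, the supremum of `H` over
`W × A = {(w⁰,w) : w⁰ ≥ 0, w ∈ C, w⁰ + |w| = 1} × A`. -/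
def bigH (C : Set (Vec m)) (A : Set (Vec q))
    (f : Vec n → Vec q → Vec n) (g : Fin m → Vec n → Vec n)
    (ℓ0 : Vec n → Vec q → ℝ) (ℓhat1 : Vec n → ℝ → Vec m → ℝ)
    (x : Vec n) (p0 : ℝ) (p : Vec n) (pi lam : ℝ) : ℝ :=
  sSup { h : ℝ | ∃ (w0 : ℝ) (w : Vec m) (a : Vec q),
    0 ≤ w0 ∧ w ∈ C ∧ w0 + ‖w‖ = 1 ∧ a ∈ A ∧
    h = Ham f g ℓ0 ℓhat1 x p0 p pi lam w0 w a }

/-- The polar of a subset of `ℝ × ℝⁿ`. -/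
def polarRN (Γ : Set (ℝ × Vec n)) : Set (ℝ × Vec n) :=
  { p | ∀ z ∈ Γ, p.1 * z.1 + (inner ℝ p.2 z.2 : ℝ) ≤ 0 }

/-- The conditions of the First Order Maximum Principle for a multiplier
`(p₀, p, π, λ)` relative to the approximating cone `Γ` of the target. -/
def FOMP (C : Set (Vec m)) (A : Set (Vec q))
    (f : Vec n → Vec q → Vec n) (g : Fin m → Vec n → Vec n)
    (ℓ0 : Vec n → Vec q → ℝ) (ℓhat1 : Vec n → ℝ → Vec m → ℝ)
    (Ψ : ℝ → Vec n → ℝ) (K : EReal)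
    (S : ℝ) (w0 : ℝ → ℝ) (w : ℝ → Vec m) (α : ℝ → Vec q)
    (y0 : ℝ → ℝ) (y : ℝ → Vec n) (β : ℝ → ℝ)
    (Γ : Set (ℝ × Vec n)) (p0 : ℝ) (p : ℝ → Vec n) (pi lam : ℝ) : Prop :=
  pi ≤ 0 ∧ 0 ≤ lam ∧
  -- (i) non-triviality
  (¬ (p0 = 0 ∧ (∀ s ∈ Icc (0:ℝ) S, p s = 0) ∧ lam = 0)) ∧
  (0 < y0 S → ¬ ((∀ s ∈ Icc (0:ℝ) S, p s = 0) ∧ lam = 0)) ∧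
  -- (ii) non-transversality
  (((β S : ℝ) : EReal) < K → pi = 0) ∧
  (∃ γ ∈ polarRN Γ,
    p0 = -lam * deriv (fun τ => Ψ τ (y S)) (y0 S) - γ.1 ∧
    p S = -lam • gradient (fun ξ => Ψ (y0 S) ξ) (y S) - γ.2) ∧
  -- (iii) adjoint equation (p absolutely continuous with the stated a.e. derivative)
  (∃ pdot : ℝ → Vec n, IntervalIntegrable pdot volume 0 S ∧
    (∀ s ∈ Icc (0:ℝ) S, p s = p 0 + ∫ t in (0:ℝ)..s, pdot t) ∧
    (∀ᵐ s ∂(volume.restrict (Icc (0:ℝ) S)),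
      pdot s = - gradient
        (fun x => Ham f g ℓ0 ℓhat1 x p0 (p s) pi lam (w0 s) (w s) (α s)) (y s))) ∧
  -- (iv) first order maximization
  (∀ᵐ s ∂(volume.restrict (Icc (0:ℝ) S)),
    Ham f g ℓ0 ℓhat1 (y s) p0 (p s) pi lam (w0 s) (w s) (α s)
      = bigH C A f g ℓ0 ℓhat1 (y s) p0 (p s) pi lam) ∧
  -- (v) vanishing of the Hamiltonian
  (∀ s ∈ Icc (0:ℝ) S, bigH C A f g ℓ0 ℓhat1 (y s) p0 (p s) pi lam = 0)

/-- Regularity hypotheses (Hp) (ii)–(v) on the data. -/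
structure HpReg (C : Set (Vec m)) (A : Set (Vec q))
    (f : Vec n → Vec q → Vec n) (g : Fin m → Vec n → Vec n)
    (ℓ0 : Vec n → Vec q → ℝ) (ℓhat1 : Vec n → ℝ → Vec m → ℝ)
    (Ψ : ℝ → Vec n → ℝ) : Prop where
  hf_cont : Continuous (fun z : Vec n × Vec q => f z.1 z.2)
  hf_diff : ∃ Df : Vec n → Vec q → (Vec n →L[ℝ] Vec n),
    Continuous (fun z : Vec n × Vec q => Df z.1 z.2) ∧
    ∀ (x : Vec n) (a : Vec q), HasFDerivAt (fun x => f x a) (Df x a) x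
  hg : ∀ i, ContDiff ℝ 1 (g i)
  hl0_cont : Continuous (fun z : Vec n × Vec q => ℓ0 z.1 z.2)
  hl0_diff : ∃ Dl0 : Vec n → Vec q → Vec n,
    Continuous (fun z : Vec n × Vec q => Dl0 z.1 z.2) ∧
    ∀ (x : Vec n) (a : Vec q), HasGradientAt (fun x => ℓ0 x a) (Dl0 x a) x
  hl1_cont : ContinuousOn (fun z : Vec n × ℝ × Vec m => ℓhat1 z.1 z.2.1 z.2.2)
    (Set.univ ×ˢ (Set.Ici (0:ℝ)) ×ˢ C)
  hl1_diff : ∃ Dl1 : Vec n → ℝ → Vec m → Vec n,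
    ContinuousOn (fun z : Vec n × ℝ × Vec m => Dl1 z.1 z.2.1 z.2.2)
      (Set.univ ×ˢ (Set.Ici (0:ℝ)) ×ˢ C) ∧
    ∀ (x : Vec n) (w0 : ℝ) (w : Vec m), 0 ≤ w0 → w ∈ C →
      HasGradientAt (fun x => ℓhat1 x w0 w) (Dl1 x w0 w) x
  hΨ : ContDiff ℝ 1 (fun z : ℝ × Vec n => Ψ z.1 z.2)

/-- Hypotheses (Hp) (i) on the sets. -/
structure HpSets (C : Set (Vec m)) (A : Set (Vec q)) (Tgt : Set (ℝ × Vec n))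
    (K : EReal) : Prop where
  hTgt_closed : IsClosed Tgt
  hTgt_sub : Tgt ⊆ {z : ℝ × Vec n | 0 ≤ z.1}
  hA : IsCompact A
  hC_closed : IsClosed C
  hC_cone : ∀ ⦃c : ℝ⦄, 0 < c → ∀ ⦃x⦄, x ∈ C → c • x ∈ C
  hK : 0 < K

/-!
The bi-Lipschitz map `σ` extends, by slope-one half-lines outside `[0, S]`, to a bi-Lipschitz
order automorphism `e` of `ℝ` fixing `0`. Such a map and its inverse send null sets to null
sets, so almost-everywhere statements and measurability pull back along `e`, and `e'` lies a.e.
between two positive constants. The change of variables formula for monotone a.e.-differentiable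
maps then transports the state equations, and the positive homogeneity of `ℓᵉ` in `(w⁰, w)`
transports the cost. For minimality, a competitor of one process is reparameterized by `e` or
`e⁻¹`; since `e` commutes with the constant extension of paths, the sup-distance between
trajectories is unchanged and only the final-time term gets scaled by a Lipschitz constant.
-/

open scoped NNReal Interval

lemma clampT_mem {S : ℝ} (hS : 0 ≤ S) (t : ℝ) : clampT S t ∈ Icc (0:ℝ) S :=
  ⟨le_max_left _ _, max_le hS (min_le_right _ _)⟩

lemma clampT_eq_self {S t : ℝ} (ht : t ∈ Icc (0:ℝ) S) : clampT S t = t := by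
  rw [clampT, min_eq_left ht.2, max_eq_right ht.1]

lemma Monotone.map_clampT {φ : ℝ → ℝ} (hφ : Monotone φ) (hφ0 : φ 0 = 0) (S t : ℝ) :
    φ (clampT S t) = clampT (φ S) (φ t) := by
  rw [clampT, clampT, hφ.map_max, hφ.map_min, hφ0]

lemma LipschitzWith.volume_image_eq_zero {f : ℝ → ℝ} {K : ℝ≥0} (hf : LipschitzWith K f)
    {s : Set ℝ} (hs : volume s = 0) : volume (f '' s) = 0 := by
  have h := hf.hausdorffMeasure_image_le zero_le_one s
  rw [hausdorffMeasure_real, hs, mul_zero] at h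
  exact nonpos_iff_eq_zero.1 h

lemma OrderIso.inv_le_deriv_of_lipschitzWith_symm (e : ℝ ≃o ℝ) {K : ℝ≥0}
    (hK : LipschitzWith K e.symm) (hK0 : 0 < K) {x : ℝ} (hx : DifferentiableAt ℝ e x) :
    (K : ℝ)⁻¹ ≤ deriv e x := by
  refine ge_of_tendsto hx.hasDerivAt.tendsto_slope ?_
  filter_upwards [self_mem_nhdsWithin] with y (hy : y ≠ x)
  have hdist : |y - x| ≤ K * |e y - e x| := by
    simpa [Real.dist_eq] using hK.dist_le_mul (e y) (e x)
  have hslope : slope e x y = |e y - e x| / |y - x| := by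
    rw [slope_def_field, ← abs_div, abs_of_nonneg]
    rcases hy.lt_or_gt with hlt | hlt
    · exact div_nonneg_of_nonpos (sub_nonpos.2 (e.monotone hlt.le)) (sub_nonpos.2 hlt.le)
    · exact div_nonneg (sub_nonneg.2 (e.monotone hlt.le)) (sub_nonneg.2 hlt.le)
  rw [hslope, le_div_iff₀ (abs_pos.2 (sub_ne_zero.2 hy)), inv_mul_le_iff₀ (by exact_mod_cast hK0)]
  exact hdist

structure IsTimeChange (e : ℝ ≃o ℝ) : Prop where
  map_zero : e 0 = 0
  lipschitz : ∃ K, LipschitzWith K e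
  lipschitz_symm : ∃ K, LipschitzWith K e.symm

namespace IsTimeChange

variable {e : ℝ ≃o ℝ}

lemma symm (he : IsTimeChange e) : IsTimeChange e.symm :=
  ⟨by rw [OrderIso.symm_apply_eq, he.map_zero], he.lipschitz_symm, he.lipschitz⟩

lemma quasiMeasurePreserving (he : IsTimeChange e) :
    Measure.QuasiMeasurePreserving e volume volume := by
  obtain ⟨K, hK⟩ := he.lipschitz_symm
  refine ⟨e.continuous.measurable, Measure.AbsolutelyContinuous.mk fun s hs hs0 => ?_⟩
  rw [Measure.map_apply e.continuous.measurable hs]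
  simpa [e.symm.image_eq_preimage_symm] using hK.volume_image_eq_zero hs0

lemma ae_differentiableAt (he : IsTimeChange e) : ∀ᵐ x, DifferentiableAt ℝ e x := by
  obtain ⟨K, hK⟩ := he.lipschitz
  exact hK.ae_differentiableAt_of_real

lemma exists_deriv_bounds (he : IsTimeChange e) :
    ∃ c L : ℝ, 0 < c ∧ ∀ x, DifferentiableAt ℝ e x → c ≤ deriv e x ∧ deriv e x ≤ L := by
  obtain ⟨K, hK⟩ := he.lipschitz
  obtain ⟨K', hK'⟩ := he.lipschitz_symm
  have hK'1 : LipschitzWith (K' + 1) e.symm := hK'.weaken le_self_add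
  refine ⟨((K' + 1 : ℝ≥0) : ℝ)⁻¹, K, by positivity, fun x hx => ⟨?_, ?_⟩⟩
  · exact e.inv_le_deriv_of_lipschitzWith_symm hK'1 (by positivity) hx
  · exact (le_abs_self _).trans (norm_deriv_le_of_lipschitz hK)

lemma exists_ae_eq_Ioc_hasDerivAt (he : IsTimeChange e) (a b : ℝ) :
    ∃ s : Set ℝ, MeasurableSet s ∧ s =ᵐ[volume] Ioc a b ∧ e '' s =ᵐ[volume] Ioc (e a) (e b) ∧
      ∀ x ∈ s, HasDerivAt e (deriv e x) x := by
  set D := {x | DifferentiableAt ℝ e x}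
  have hD : D =ᵐ[volume] (univ : Set ℝ) := ae_eq_univ.2 he.ae_differentiableAt
  have hD' : e.symm ⁻¹' D =ᵐ[volume] (univ : Set ℝ) :=
    ae_eq_univ.2 (he.symm.quasiMeasurePreserving.ae he.ae_differentiableAt)
  refine ⟨Ioc a b ∩ D, measurableSet_Ioc.inter (measurableSet_of_differentiableAt ℝ e),
    by simpa using (ae_eq_refl (Ioc a b)).inter hD, ?_, fun x hx => hx.2.hasDerivAt⟩
  rw [image_inter e.injective, e.image_Ioc, e.image_eq_preimage_symm]
  simpa using (ae_eq_refl (Ioc (e a) (e b))).inter hD'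

variable {F : Type*} [NormedAddCommGroup F] [NormedSpace ℝ F]

lemma integral_deriv_smul_comp (he : IsTimeChange e) {a b : ℝ} (hab : a ≤ b) (g : ℝ → F) :
    ∫ x in a..b, deriv e x • g (e x) = ∫ u in e a..e b, g u := by
  obtain ⟨s, hs, hsab, hes, hderiv⟩ := he.exists_ae_eq_Ioc_hasDerivAt a b
  rw [intervalIntegral.integral_of_le hab, intervalIntegral.integral_of_le (e.monotone hab),
    ← setIntegral_congr_set hsab, ← setIntegral_congr_set hes,
    integral_image_eq_integral_deriv_smul_of_monotoneOn hs
      (fun x hx => (hderiv x hx).hasDerivWithinAt) (e.monotone.monotoneOn s)]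

lemma intervalIntegrable_deriv_smul_comp_iff (he : IsTimeChange e) {a b : ℝ} (hab : a ≤ b)
    (g : ℝ → F) :
    IntervalIntegrable (fun x => deriv e x • g (e x)) volume a b ↔
      IntervalIntegrable g volume (e a) (e b) := by
  obtain ⟨s, hs, hsab, hes, hderiv⟩ := he.exists_ae_eq_Ioc_hasDerivAt a b
  rw [intervalIntegrable_iff_integrableOn_Ioc_of_le hab,
    intervalIntegrable_iff_integrableOn_Ioc_of_le (e.monotone hab),
    ← integrableOn_congr_set_ae hsab, ← integrableOn_congr_set_ae hes,
    integrableOn_image_iff_integrableOn_deriv_smul_of_monotoneOn hs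
      (fun x hx => (hderiv x hx).hasDerivWithinAt) (e.monotone.monotoneOn s)]

end IsTimeChange

lemma exists_orderIso_of_sub_bounds {f : ℝ → ℝ} {m M : ℝ} (hm : 0 < m)
    (hf : ∀ x y, x ≤ y → m * (y - x) ≤ f y - f x ∧ f y - f x ≤ M * (y - x)) :
    ∃ e : ℝ ≃o ℝ, ⇑e = f ∧ (∃ K, LipschitzWith K e) ∧ ∃ K, LipschitzWith K e.symm := by
  have hmono : StrictMono f := fun x y hxy => by nlinarith [hf x y hxy.le]
  have hdist_le : ∀ x y, x ≤ y →
      m * dist x y ≤ dist (f x) (f y) ∧ dist (f x) (f y) ≤ M * dist x y := by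
    intro x y hxy
    rw [dist_comm x, dist_comm (f x), Real.dist_eq, Real.dist_eq,
      abs_of_nonneg (sub_nonneg.2 hxy), abs_of_nonneg (sub_nonneg.2 (hmono.monotone hxy))]
    exact hf x y hxy
  have hdist : ∀ x y, m * dist x y ≤ dist (f x) (f y) ∧ dist (f x) (f y) ≤ M * dist x y := by
    intro x y
    rcases le_total x y with hxy | hxy
    · exact hdist_le x y hxy
    · rw [dist_comm x, dist_comm (f x)]
      exact hdist_le y x hxy
  have hcont : Continuous f := (LipschitzWith.of_dist_le' fun x y => (hdist x y).2).continuous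
  have hsurj : Function.Surjective f := by
    intro u
    set r := (|u| + |f 0|) / m
    have hr : 0 ≤ r := by positivity
    have hmr : m * r = |u| + |f 0| := mul_div_cancel₀ _ hm.ne'
    have h₁ := (hf (-r) 0 (by linarith)).1
    have h₂ := (hf 0 r hr).1
    exact intermediate_value_univ (-r) r hcont
      ⟨by linarith [le_abs_self (f 0), neg_abs_le u], by linarith [le_abs_self u, neg_abs_le (f 0)]⟩
  set e := hmono.orderIsoOfSurjective f hsurj
  refine ⟨e, rfl, ⟨_, LipschitzWith.of_dist_le' fun x y => (hdist x y).2⟩,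
    ⟨_, LipschitzWith.of_dist_le' (K := m⁻¹) fun u v => ?_⟩⟩
  obtain ⟨x, rfl⟩ := e.surjective u
  obtain ⟨y, rfl⟩ := e.surjective v
  rw [e.symm_apply_apply, e.symm_apply_apply, le_inv_mul_iff₀ hm]
  exact (hdist x y).1

lemma exists_isTimeChange_eqOn {S c L : ℝ} {σ : ℝ → ℝ} (hS : 0 ≤ S)
    (hmono : MonotoneOn σ (Icc 0 S)) (hσ0 : σ 0 = 0) (hc : 0 < c)
    (hbilip : ∀ s₁ ∈ Icc (0:ℝ) S, ∀ s₂ ∈ Icc (0:ℝ) S,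
      c * |s₁ - s₂| ≤ |σ s₁ - σ s₂| ∧ |σ s₁ - σ s₂| ≤ L * |s₁ - s₂|) :
    ∃ e : ℝ ≃o ℝ, IsTimeChange e ∧ EqOn σ e (Icc 0 S) := by
  set f := fun t => σ (clampT S t) + (t - clampT S t) with hf_def
  have hf : ∀ x y, x ≤ y →
      min c 1 * (y - x) ≤ f y - f x ∧ f y - f x ≤ max L 1 * (y - x) := by
    intro x y hxy
    have hx := clampT_mem hS x
    have hy := clampT_mem hS y
    have hclamp : clampT S x ≤ clampT S y := max_le_max le_rfl (min_le_min_right S hxy)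
    have hclamp' : clampT S y - clampT S x ≤ y - x := by
      have := ((LipschitzWith.id.min_const S).const_max 0).dist_le_mul y x
      simp only [Real.dist_eq, NNReal.coe_one, one_mul, id] at this
      exact (le_abs_self _).trans (this.trans_eq (abs_of_nonneg (sub_nonneg.2 hxy)))
    have hσ := hbilip _ hy _ hx
    rw [abs_of_nonneg (sub_nonneg.2 hclamp),
      abs_of_nonneg (sub_nonneg.2 (hmono hx hy hclamp))] at hσ
    have h₁ := mul_nonneg (sub_nonneg.2 (min_le_left c 1)) (sub_nonneg.2 hclamp)
    have h₂ := mul_nonneg (sub_nonneg.2 (min_le_right c 1)) (sub_nonneg.2 hclamp')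
    have h₃ := mul_nonneg (sub_nonneg.2 (le_max_left L 1)) (sub_nonneg.2 hclamp)
    have h₄ := mul_nonneg (sub_nonneg.2 (le_max_right L 1)) (sub_nonneg.2 hclamp')
    simp only [hf_def]
    constructor <;> linarith
  obtain ⟨e, hef, hlip, hlip_symm⟩ := exists_orderIso_of_sub_bounds (lt_min hc one_pos) hf
  have hfσ : EqOn σ f (Icc 0 S) := fun s hs => by simp [hf_def, clampT_eq_self hs]
  refine ⟨e, ⟨?_, hlip, hlip_symm⟩, hef ▸ hfσ⟩
  rw [hef, ← hfσ ⟨le_rfl, hS⟩, hσ0]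

lemma ae_eq_deriv_of_eqOn {S : ℝ} {σ σ' φ : ℝ → ℝ} (hσ : EqOn σ φ (Icc 0 S))
    (hderiv : ∀ᵐ s ∂(volume.restrict (Icc (0:ℝ) S)), HasDerivAt σ (σ' s) s) :
    σ' =ᵐ[volume.restrict (Icc 0 S)] deriv φ := by
  rw [← Measure.restrict_congr_set Ioo_ae_eq_Icc] at hderiv ⊢
  filter_upwards [hderiv, ae_restrict_mem measurableSet_Ioo] with s hs hsI
  refine (hs.congr_of_eventuallyEq ?_).deriv.symm
  filter_upwards [isOpen_Ioo.mem_nhds hsI] with t ht using (hσ (Ioo_subset_Icc_self ht)).symm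

lemma uIoc_zero_subset_Icc {S s : ℝ} (hs : s ∈ Icc (0:ℝ) S) : Ι 0 s ⊆ Icc 0 S := by
  rw [uIoc_of_le hs.1]
  exact Ioc_subset_Icc_self.trans (Icc_subset_Icc_right hs.2)

lemma Fe_smul (f : Vec n → Vec q → Vec n) (g : Fin m → Vec n → Vec n)
    (x : Vec n) (w0 : ℝ) (w : Vec m) (a : Vec q) (r : ℝ) :
    Fe f g x (w0 * r) (r • w) a = r • Fe f g x w0 w a := by
  simp only [Fe, smul_add, Finset.smul_sum, smul_smul, PiLp.smul_apply, smul_eq_mul, mul_comm]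

lemma IsRecessionOf.apply_smul {C : Set (Vec m)} {ℓhat1 : Vec n → ℝ → Vec m → ℝ}
    {ℓ1 : Vec n → Vec m → ℝ} (hrec : IsRecessionOf C ℓhat1 ℓ1)
    (hC : ∀ ⦃c : ℝ⦄, 0 < c → ∀ ⦃x⦄, x ∈ C → c • x ∈ C)
    (x : Vec n) {w0 r : ℝ} {w : Vec m} (hw0 : 0 ≤ w0) (hw : w ∈ C) (hr : 0 < r) :
    ℓhat1 x (r * w0) (r • w) = r * ℓhat1 x w0 w := by
  have hscale : Tendsto (fun t => r * t) (𝓝[Ioi 0] w0) (𝓝[Ioi 0] (r * w0)) :=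
    (continuous_const_mul r).continuousWithinAt.tendsto_nhdsWithin fun t ht => mul_pos hr ht
  have : (𝓝[Ioi (0:ℝ)] w0).NeBot := by
    rwa [← mem_closure_iff_nhdsWithin_neBot, closure_Ioi]
  refine tendsto_nhds_unique (((hrec x _ (by positivity) _ (hC hr hw)).comp hscale).congr' ?_)
    ((hrec x w0 hw0 w hw).const_mul r)
  filter_upwards [self_mem_nhdsWithin] with t (ht : 0 < t)
  rw [Function.comp_apply, smul_smul, show (r * t)⁻¹ * r = t⁻¹ by field_simp, mul_assoc]

lemma extL_smul {C : Set (Vec m)} {ℓ0 : Vec n → Vec q → ℝ} {ℓhat1 : Vec n → ℝ → Vec m → ℝ}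
    {ℓ1 : Vec n → Vec m → ℝ} (hrec : IsRecessionOf C ℓhat1 ℓ1)
    (hC : ∀ ⦃c : ℝ⦄, 0 < c → ∀ ⦃x⦄, x ∈ C → c • x ∈ C)
    (x : Vec n) {w0 r : ℝ} {w : Vec m} (a : Vec q) (hw0 : 0 ≤ w0) (hw : w ∈ C) (hr : 0 < r) :
    extL ℓ0 ℓhat1 x (w0 * r) (r • w) a = r * extL ℓ0 ℓhat1 x w0 w a := by
  rw [extL, extL, mul_comm w0 r, hrec.apply_smul hC x hw0 hw hr]
  ring

structure IsReparam (e : ℝ ≃o ℝ) (S St : ℝ) (σ σ' : ℝ → ℝ) : Prop where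
  isTimeChange : IsTimeChange e
  pos : 0 < S
  map_end : e S = St
  eqOn : EqOn σ e (Icc 0 S)
  ae_eq_deriv : σ' =ᵐ[volume.restrict (Icc 0 S)] deriv e

namespace IsReparam

variable {e : ℝ ≃o ℝ} {S St : ℝ} {σ σ' : ℝ → ℝ}

lemma end_mem (h : IsReparam e S St σ σ') : S ∈ Icc 0 S := right_mem_Icc.2 h.pos.le

lemma apply_end (h : IsReparam e S St σ σ') : σ S = St := h.eqOn h.end_mem ▸ h.map_end

lemma mapsTo (h : IsReparam e S St σ σ') : MapsTo e (Icc 0 S) (Icc 0 St) := fun _ hs =>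
  ⟨h.isTimeChange.map_zero ▸ e.monotone hs.1, h.map_end ▸ e.monotone hs.2⟩

lemma apply_mem (h : IsReparam e S St σ σ') {s : ℝ} (hs : s ∈ Icc 0 S) : σ s ∈ Icc 0 St :=
  h.eqOn hs ▸ h.mapsTo hs

lemma ae_eq (h : IsReparam e S St σ σ') : σ =ᵐ[volume.restrict (Icc 0 S)] e := by
  filter_upwards [ae_restrict_mem measurableSet_Icc] with s hs using h.eqOn hs

lemma quasiMeasurePreserving (h : IsReparam e S St σ σ') :
    Measure.QuasiMeasurePreserving e (volume.restrict (Icc 0 S)) (volume.restrict (Icc 0 St)) :=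
  h.isTimeChange.quasiMeasurePreserving.restrict h.mapsTo

lemma ae_comp (h : IsReparam e S St σ σ') {P : ℝ → Prop}
    (hP : ∀ᵐ u ∂(volume.restrict (Icc (0:ℝ) St)), P u) :
    ∀ᵐ s ∂(volume.restrict (Icc (0:ℝ) S)), P (σ s) := by
  filter_upwards [h.quasiMeasurePreserving.ae hP, h.ae_eq] with s hs hσs
  rwa [hσs]

lemma aestronglyMeasurable_comp (h : IsReparam e S St σ σ') {X : Type*} [TopologicalSpace X]
    {φ : ℝ → X} (hφ : AEStronglyMeasurable φ (volume.restrict (Icc 0 St))) :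
    AEStronglyMeasurable (fun s => φ (σ s)) (volume.restrict (Icc 0 S)) :=
  (hφ.comp_quasiMeasurePreserving h.quasiMeasurePreserving).congr
    (h.ae_eq.mono fun s hs => by simp [hs])

lemma aemeasurable_comp (h : IsReparam e S St σ σ') {φ : ℝ → ℝ}
    (hφ : AEMeasurable φ (volume.restrict (Icc 0 St))) :
    AEMeasurable (fun s => φ (σ s)) (volume.restrict (Icc 0 S)) :=
  (h.aestronglyMeasurable_comp hφ.aestronglyMeasurable).aemeasurable

lemma aemeasurable_deriv (h : IsReparam e S St σ σ') :
    AEMeasurable σ' (volume.restrict (Icc 0 S)) :=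
  (measurable_deriv e).aemeasurable.congr h.ae_eq_deriv.symm

lemma exists_deriv_bounds (h : IsReparam e S St σ σ') :
    ∃ c L : ℝ, 0 < c ∧ ∀ᵐ s ∂(volume.restrict (Icc (0:ℝ) S)), c ≤ σ' s ∧ σ' s ≤ L := by
  obtain ⟨c, L, hc, hbd⟩ := h.isTimeChange.exists_deriv_bounds
  refine ⟨c, L, hc, ?_⟩
  filter_upwards [h.ae_eq_deriv, ae_restrict_of_ae h.isTimeChange.ae_differentiableAt]
    with s hs hd
  exact hs ▸ hbd s hd

variable {F : Type*} [NormedAddCommGroup F] [NormedSpace ℝ F]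

lemma smul_comp_ae_eq (h : IsReparam e S St σ σ') {s : ℝ} (hs : s ∈ Icc 0 S) (φ : ℝ → F) :
    (fun t => σ' t • φ (σ t)) =ᵐ[volume.restrict (Ι 0 s)] fun t => deriv e t • φ (e t) := by
  refine ae_restrict_of_ae_restrict_of_subset (uIoc_zero_subset_Icc hs) ?_
  filter_upwards [h.ae_eq_deriv, h.ae_eq] with t h₁ h₂
  rw [h₁, h₂]

lemma integral_smul_comp (h : IsReparam e S St σ σ') {s : ℝ} (hs : s ∈ Icc 0 S) (φ : ℝ → F) :
    ∫ t in 0..s, σ' t • φ (σ t) = ∫ u in 0..σ s, φ u := by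
  rw [intervalIntegral.integral_congr_ae_restrict (h.smul_comp_ae_eq hs φ),
    h.isTimeChange.integral_deriv_smul_comp hs.1, h.isTimeChange.map_zero, h.eqOn hs]

lemma intervalIntegrable_smul_comp_iff (h : IsReparam e S St σ σ') (φ : ℝ → F) :
    IntervalIntegrable (fun t => σ' t • φ (σ t)) volume 0 S ↔
      IntervalIntegrable φ volume 0 St := by
  rw [intervalIntegrable_congr_ae (h.smul_comp_ae_eq h.end_mem φ),
    h.isTimeChange.intervalIntegrable_deriv_smul_comp_iff h.pos.le, h.isTimeChange.map_zero,
    h.map_end]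

end IsReparam

namespace IsReparam

variable {C : Set (Vec m)} {A : Set (Vec q)} {f : Vec n → Vec q → Vec n}
  {g : Fin m → Vec n → Vec n} {xck : Vec n} {e : ℝ ≃o ℝ} {S St : ℝ} {σ σ' : ℝ → ℝ}
  {w0 : ℝ → ℝ} {w : ℝ → Vec m} {α : ℝ → Vec q} {y0 : ℝ → ℝ} {y : ℝ → Vec n} {β : ℝ → ℝ}

theorem isSTProcess (h : IsReparam e S St σ σ')
    (hC : ∀ ⦃c : ℝ⦄, 0 < c → ∀ ⦃x⦄, x ∈ C → c • x ∈ C)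
    (hproc : IsSTProcess C A f g xck St w0 w α y0 y β) :
    IsSTProcess C A f g xck S (fun s => w0 (σ s) * σ' s) (fun s => σ' s • w (σ s))
      (fun s => α (σ s)) (fun s => y0 (σ s)) (fun s => y (σ s)) (fun s => β (σ s)) := by
  obtain ⟨c, L, hc, hbd⟩ := h.exists_deriv_bounds
  have hpos : ∀ᵐ s ∂(volume.restrict (Icc (0:ℝ) S)), 0 < σ' s :=
    hbd.mono fun s hs => hc.trans_le hs.1
  have hnorm : ∀ᵐ s ∂(volume.restrict (Icc (0:ℝ) S)),
      ‖σ' s • w (σ s)‖ = σ' s * ‖w (σ s)‖ :=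
    hpos.mono fun s hs => norm_smul_of_nonneg hs.le _
  refine ⟨h.pos, (h.aemeasurable_comp hproc.meas_w0).mul h.aemeasurable_deriv,
    h.aemeasurable_deriv.aestronglyMeasurable.smul (h.aestronglyMeasurable_comp hproc.meas_w),
    h.aestronglyMeasurable_comp hproc.meas_α, ?ess_bdd, ?mem_ae, ?essinf_pos, ?int_w0, ?int_F,
    ?int_w, fun s hs => ?_, fun s hs => ?_, fun s hs => ?_⟩
  case ess_bdd =>
    obtain ⟨M, hM⟩ := hproc.ess_bdd
    refine ⟨L * M, ?_⟩
    filter_upwards [h.ae_comp hM, hbd, hpos, hnorm] with s hM hbd hpos hnorm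
    rw [hnorm, abs_mul, abs_of_pos hpos, mul_comm, ← mul_add]
    exact mul_le_mul hbd.2 hM (by positivity) (hpos.le.trans hbd.2)
  case mem_ae =>
    filter_upwards [h.ae_comp hproc.mem_ae, hpos] with s ⟨hw0, hw, hα⟩ hpos
    exact ⟨mul_nonneg hw0 hpos.le, hC hpos hw, hα⟩
  case essinf_pos =>
    obtain ⟨c₀, hc₀, hlow⟩ := hproc.essinf_pos
    refine ⟨c * c₀, mul_pos hc hc₀, ?_⟩
    filter_upwards [h.ae_comp hlow, hbd, hpos, hnorm] with s hlow hbd hpos hnorm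
    rw [hnorm, mul_comm (w0 _), ← mul_add]
    exact mul_le_mul hbd.1 hlow hc₀.le hpos.le
  case int_w0 =>
    simpa only [smul_eq_mul, mul_comm] using (h.intervalIntegrable_smul_comp_iff w0).2 hproc.int_w0
  case int_F =>
    simpa only [Fe_smul] using (h.intervalIntegrable_smul_comp_iff _).2 hproc.int_F
  case int_w =>
    refine (intervalIntegrable_congr_ae ?_).1
      ((h.intervalIntegrable_smul_comp_iff fun u => ‖w u‖).2 hproc.int_w)
    filter_upwards [ae_restrict_of_ae_restrict_of_subset (uIoc_zero_subset_Icc h.end_mem) hnorm]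
      with s hs
    rw [hs, smul_eq_mul]
  · rw [hproc.sol_y0 _ (h.apply_mem hs), ← h.integral_smul_comp hs]
    simp only [smul_eq_mul, mul_comm]
  · rw [hproc.sol_y _ (h.apply_mem hs), ← h.integral_smul_comp hs]
    simp only [Fe_smul]
  · rw [hproc.sol_β _ (h.apply_mem hs), ← h.integral_smul_comp hs]
    refine intervalIntegral.integral_congr_ae_restrict ?_
    filter_upwards [ae_restrict_of_ae_restrict_of_subset (uIoc_zero_subset_Icc hs) hnorm]
      with t ht
    rw [ht, smul_eq_mul]

lemma stFeasible_iff (h : IsReparam e S St σ σ') {Tgt : Set (ℝ × Vec n)} {K : EReal} :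
    STFeasible Tgt K St y0 y β ↔
      STFeasible Tgt K S (fun s => y0 (σ s)) (fun s => y (σ s)) (fun s => β (σ s)) := by
  simp only [STFeasible, h.apply_end]

theorem stCost_eq (h : IsReparam e S St σ σ') {ℓ0 : Vec n → Vec q → ℝ}
    {ℓ1 : Vec n → Vec m → ℝ} {ℓhat1 : Vec n → ℝ → Vec m → ℝ} (hrec : IsRecessionOf C ℓhat1 ℓ1)
    (hC : ∀ ⦃c : ℝ⦄, 0 < c → ∀ ⦃x⦄, x ∈ C → c • x ∈ C) {Ψ : ℝ → Vec n → ℝ}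
    (hproc : IsSTProcess C A f g xck St w0 w α y0 y β) :
    STCost Ψ ℓ0 ℓhat1 St w0 w α y0 y =
      STCost Ψ ℓ0 ℓhat1 S (fun s => w0 (σ s) * σ' s) (fun s => σ' s • w (σ s))
        (fun s => α (σ s)) (fun s => y0 (σ s)) (fun s => y (σ s)) := by
  obtain ⟨c, L, hc, hbd⟩ := h.exists_deriv_bounds
  rw [STCost, STCost, h.apply_end]
  congr 1
  rw [← h.apply_end, ← h.integral_smul_comp h.end_mem]
  refine intervalIntegral.integral_congr_ae_restrict ?_
  filter_upwards [ae_restrict_of_ae_restrict_of_subset (uIoc_zero_subset_Icc h.end_mem)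
    (h.ae_comp hproc.mem_ae), ae_restrict_of_ae_restrict_of_subset
      (uIoc_zero_subset_Icc h.end_mem) hbd] with s hmem hbd
  rw [smul_eq_mul, extL_smul hrec hC _ _ hmem.1 hmem.2.1 (hc.trans_le hbd.1)]

end IsReparam

lemma IsReparam.apply_symm {e : ℝ ≃o ℝ} {S St : ℝ} {σ σ' : ℝ → ℝ} (h : IsReparam e S St σ σ')
    {u : ℝ} (hu : u ∈ Icc 0 St) : σ (e.symm u) = u := by
  have hmem : e.symm u ∈ Icc 0 S :=
    ⟨h.isTimeChange.symm.map_zero ▸ e.symm.monotone hu.1,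
      (e.symm_apply_eq.2 h.map_end.symm) ▸ e.symm.monotone hu.2⟩
  rw [h.eqOn hmem, e.apply_symm_apply]

lemma dProc_congr_left {E : Type*} [PseudoMetricSpace E] {S₁ S₂ : ℝ} {z₁ z₁' z₂ : ℝ → E}
    (hS₁ : 0 ≤ S₁) (h : EqOn z₁ z₁' (Icc 0 S₁)) :
    dProc S₁ z₁ S₂ z₂ = dProc S₁ z₁' S₂ z₂ := by
  have hz : ∀ t, z₁ (clampT S₁ t) = z₁' (clampT S₁ t) := fun t => h (clampT_mem hS₁ t)
  simp only [dProc, hz]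

lemma IsTimeChange.dProc_comp_le {e : ℝ ≃o ℝ} (he : IsTimeChange e) {K : ℝ≥0}
    (hK : LipschitzWith K e.symm) {E : Type*} [PseudoMetricSpace E] (S₁ S₂ : ℝ)
    (z₁ z₂ : ℝ → E) :
    dProc (e.symm S₁) (fun s => z₁ (e s)) (e.symm S₂) (fun s => z₂ (e s)) ≤
      (1 + K) * dProc S₁ z₁ S₂ z₂ := by
  have hclamp : ∀ a t, e (clampT (e.symm a) t) = clampT a (e t) := fun a t => by
    rw [e.monotone.map_clampT he.map_zero, e.apply_symm_apply]
  have hsup : (⨆ t, dist (z₁ (e (clampT (e.symm S₁) t))) (z₂ (e (clampT (e.symm S₂) t)))) =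
      ⨆ u, dist (z₁ (clampT S₁ u)) (z₂ (clampT S₂ u)) := by
    simp only [hclamp]
    exact e.surjective.iSup_comp fun u => dist (z₁ (clampT S₁ u)) (z₂ (clampT S₂ u))
  have hend : |e.symm S₁ - e.symm S₂| ≤ K * |S₁ - S₂| := by
    simpa [Real.dist_eq] using hK.dist_le_mul S₁ S₂
  have hsup_nonneg : 0 ≤ ⨆ u, dist (z₁ (clampT S₁ u)) (z₂ (clampT S₂ u)) :=
    Real.iSup_nonneg fun _ => dist_nonneg
  rw [dProc, dProc, hsup]
  nlinarith [abs_nonneg (S₁ - S₂), mul_nonneg K.coe_nonneg hsup_nonneg]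

section Minimizers

variable {C : Set (Vec m)} {A : Set (Vec q)} {f : Vec n → Vec q → Vec n}
  {g : Fin m → Vec n → Vec n} {xck : Vec n} {Tgt : Set (ℝ × Vec n)} {K : EReal}
  {Ψ : ℝ → Vec n → ℝ} {ℓ0 : Vec n → Vec q → ℝ} {ℓhat1 : Vec n → ℝ → Vec m → ℝ}

/-- Competitors of `X` are carried by `e` to competitors of `Y` at comparable distance and with
the same cost. -/
theorem IsSTLocalMin.of_reparam {ℓ1 : Vec n → Vec m → ℝ} (hrec : IsRecessionOf C ℓhat1 ℓ1)
    (hC : ∀ ⦃c : ℝ⦄, 0 < c → ∀ ⦃x⦄, x ∈ C → c • x ∈ C)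
    {Sy Sx : ℝ} {w0y w0x : ℝ → ℝ} {wy wx : ℝ → Vec m} {αy αx : ℝ → Vec q}
    {y0y y0x : ℝ → ℝ} {yy yx : ℝ → Vec n} {βy βx : ℝ → ℝ}
    (hY : IsSTLocalMin C A f g xck Tgt K Ψ ℓ0 ℓhat1 Sy w0y wy αy y0y yy βy)
    (hX : IsSTProcess C A f g xck Sx w0x wx αx y0x yx βx)
    {e : ℝ ≃o ℝ} (he : IsTimeChange e) (hSy : e Sy = Sx)
    (hstate : EqOn (fun s => (y0y s, yy s, βy s)) (fun s => (y0x (e s), yx (e s), βx (e s)))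
      (Icc 0 Sy))
    (hcost : STCost Ψ ℓ0 ℓhat1 Sy w0y wy αy y0y yy = STCost Ψ ℓ0 ℓhat1 Sx w0x wx αx y0x yx) :
    IsSTLocalMin C A f g xck Tgt K Ψ ℓ0 ℓhat1 Sx w0x wx αx y0x yx βx := by
  obtain ⟨hYproc, hYfeas, δ, hδ, hYmin⟩ := hY
  obtain ⟨Kc, hKc⟩ := he.lipschitz_symm
  have hend := hstate (right_mem_Icc.2 hYproc.hS.le)
  simp only [hSy, Prod.mk.injEq] at hend
  have hXfeas : STFeasible Tgt K Sx y0x yx βx := by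
    rwa [STFeasible, ← hend.1, ← hend.2.1, ← hend.2.2]
  refine ⟨hX, hXfeas, δ / (1 + Kc), by positivity, fun S' w0' w' α' y0' y' β' hQ hQfeas hdist => ?_⟩
  have hr : IsReparam e (e.symm S') S' e (deriv e) :=
    ⟨he, he.symm.map_zero ▸ e.symm.strictMono hQ.hS, e.apply_symm_apply S', fun _ _ => rfl,
      ae_eq_refl _⟩
  have hdist' : dProc Sy (fun s => (y0y s, yy s, βy s)) (e.symm S')
      (fun s => (y0' (e s), y' (e s), β' (e s))) < δ := by
    rw [dProc_congr_left hYproc.hS.le hstate, ← e.symm_apply_eq.2 hSy.symm]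
    calc _ ≤ (1 + Kc) * dProc Sx (fun u => (y0x u, yx u, βx u)) S'
            (fun u => (y0' u, y' u, β' u)) := he.dProc_comp_le hKc Sx S' _ _
      _ < (1 + Kc) * (δ / (1 + Kc)) := by gcongr
      _ = δ := mul_div_cancel₀ δ (by positivity)
  calc STCost Ψ ℓ0 ℓhat1 Sx w0x wx αx y0x yx = STCost Ψ ℓ0 ℓhat1 Sy w0y wy αy y0y yy := hcost.symm
    _ ≤ _ := hYmin _ _ _ _ _ _ _ (hr.isSTProcess hC hQ) (hr.stFeasible_iff.1 hQfeas) hdist'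
    _ = STCost Ψ ℓ0 ℓhat1 S' w0' w' α' y0' y' := (hr.stCost_eq hrec hC hQ).symm

lemma isSTGlobalMin_iff_of_stCost_eq {S₁ S₂ : ℝ} {w0₁ w0₂ : ℝ → ℝ} {w₁ w₂ : ℝ → Vec m}
    {α₁ α₂ : ℝ → Vec q} {y0₁ y0₂ : ℝ → ℝ} {y₁ y₂ : ℝ → Vec n} {β₁ β₂ : ℝ → ℝ}
    (h₁ : IsSTProcess C A f g xck S₁ w0₁ w₁ α₁ y0₁ y₁ β₁)
    (h₂ : IsSTProcess C A f g xck S₂ w0₂ w₂ α₂ y0₂ y₂ β₂)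
    (hfeas : STFeasible Tgt K S₁ y0₁ y₁ β₁ ↔ STFeasible Tgt K S₂ y0₂ y₂ β₂)
    (hcost : STCost Ψ ℓ0 ℓhat1 S₁ w0₁ w₁ α₁ y0₁ y₁ = STCost Ψ ℓ0 ℓhat1 S₂ w0₂ w₂ α₂ y0₂ y₂) :
    IsSTGlobalMin C A f g xck Tgt K Ψ ℓ0 ℓhat1 S₁ w0₁ w₁ α₁ y0₁ y₁ β₁ ↔
      IsSTGlobalMin C A f g xck Tgt K Ψ ℓ0 ℓhat1 S₂ w0₂ w₂ α₂ y0₂ y₂ β₂ := by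
  simp only [IsSTGlobalMin, h₁, h₂, hfeas, hcost, true_and]

end Minimizers

theorem spaceTime_reparameterization_equivalence_general
    {n m q : ℕ} (C : Set (Vec m)) (A : Set (Vec q))
    (f : Vec n → Vec q → Vec n) (g : Fin m → Vec n → Vec n) (xck : Vec n)
    (Tgt : Set (ℝ × Vec n)) (K : EReal) (Ψ : ℝ → Vec n → ℝ)
    (ℓ0 : Vec n → Vec q → ℝ) (ℓ1 : Vec n → Vec m → ℝ) (ℓhat1 : Vec n → ℝ → Vec m → ℝ)
    (hSets : HpSets C A Tgt K)
    (hrec : IsRecessionOf C ℓhat1 ℓ1)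
    -- the given space-time process
    (St : ℝ) (w0t : ℝ → ℝ) (wt : ℝ → Vec m) (αt : ℝ → Vec q)
    (y0t : ℝ → ℝ) (yt : ℝ → Vec n) (βt : ℝ → ℝ)
    (hproc : IsSTProcess C A f g xck St w0t wt αt y0t yt βt)
    -- σ : [0,S] → [0,S̃] strictly increasing, surjective, bi-Lipschitz,
    -- with a.e. derivative σ'
    (S : ℝ) (hS : 0 < S) (σ σ' : ℝ → ℝ)
    (hmono : StrictMonoOn σ (Icc (0:ℝ) S))
    (hσ0 : σ 0 = 0) (hσS : σ S = St)
    (hbilip : ∃ c L : ℝ, 0 < c ∧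
      ∀ s₁ ∈ Icc (0:ℝ) S, ∀ s₂ ∈ Icc (0:ℝ) S,
        c * |s₁ - s₂| ≤ |σ s₁ - σ s₂| ∧ |σ s₁ - σ s₂| ≤ L * |s₁ - s₂|)
    (hderiv : ∀ᵐ s ∂(volume.restrict (Icc (0:ℝ) S)), HasDerivAt σ (σ' s) s) :
    IsSTProcess C A f g xck S
      (fun s => w0t (σ s) * σ' s) (fun s => σ' s • wt (σ s)) (fun s => αt (σ s))
      (fun s => y0t (σ s)) (fun s => yt (σ s)) (fun s => βt (σ s)) ∧
    (STFeasible Tgt K St y0t yt βt ↔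
      STFeasible Tgt K S (fun s => y0t (σ s)) (fun s => yt (σ s)) (fun s => βt (σ s))) ∧
    STCost Ψ ℓ0 ℓhat1 St w0t wt αt y0t yt
      = STCost Ψ ℓ0 ℓhat1 S (fun s => w0t (σ s) * σ' s) (fun s => σ' s • wt (σ s))
          (fun s => αt (σ s)) (fun s => y0t (σ s)) (fun s => yt (σ s)) ∧
    (IsSTLocalMin C A f g xck Tgt K Ψ ℓ0 ℓhat1 St w0t wt αt y0t yt βt ↔
      IsSTLocalMin C A f g xck Tgt K Ψ ℓ0 ℓhat1 S
        (fun s => w0t (σ s) * σ' s) (fun s => σ' s • wt (σ s)) (fun s => αt (σ s))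
        (fun s => y0t (σ s)) (fun s => yt (σ s)) (fun s => βt (σ s))) ∧
    (IsSTGlobalMin C A f g xck Tgt K Ψ ℓ0 ℓhat1 St w0t wt αt y0t yt βt ↔
      IsSTGlobalMin C A f g xck Tgt K Ψ ℓ0 ℓhat1 S
        (fun s => w0t (σ s) * σ' s) (fun s => σ' s • wt (σ s)) (fun s => αt (σ s))
        (fun s => y0t (σ s)) (fun s => yt (σ s)) (fun s => βt (σ s))) := by
  obtain ⟨c, L, hc, hσbilip⟩ := hbilip
  obtain ⟨e, he, hσe⟩ := exists_isTimeChange_eqOn hS.le hmono.monotoneOn hσ0 hc hσbilip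
  have hr : IsReparam e S St σ σ' :=
    ⟨he, hS, (hσe (right_mem_Icc.2 hS.le)).symm.trans hσS, hσe, ae_eq_deriv_of_eqOn hσe hderiv⟩
  have hC := hSets.hC_cone
  have hproc' := hr.isSTProcess hC hproc
  have hcost := hr.stCost_eq (Ψ := Ψ) (ℓ0 := ℓ0) hrec hC hproc
  refine ⟨hproc', hr.stFeasible_iff, hcost, ⟨fun hmin => ?_, fun hmin => ?_⟩,
    isSTGlobalMin_iff_of_stCost_eq hproc hproc' hr.stFeasible_iff hcost⟩
  · refine hmin.of_reparam hrec hC hproc' he.symm (e.symm_apply_eq.2 hr.map_end.symm)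
      (fun u hu => ?_) hcost
    simp only [hr.apply_symm hu]
  · refine hmin.of_reparam hrec hC hproc he hr.map_end (fun s hs => ?_) hcost.symm
    simp only [hσe hs]

/-- Let `σ : [0,S] → [0,S̃]` be strictly increasing, surjective and
bi-Lipschitz, with a.e. derivative `σ'`, and let `(S̃, w̃⁰, w̃, α̃, ỹ⁰, ỹ, β̃)` be a
space-time process.  Then the reparameterized tuple
`(S, (w̃⁰∘σ)·σ', ((w̃∘σ)·σ'), α̃∘σ, ỹ⁰∘σ, ỹ∘σ, β̃∘σ)` is a space-time process; it is
feasible iff the original is; the costs coincide; and the original is a local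
(resp. global) minimizer of the space-time problem iff the reparameterized process is. -/
theorem spaceTime_reparameterization_equivalence
    {n m q : ℕ} (C : Set (Vec m)) (A : Set (Vec q))
    (f : Vec n → Vec q → Vec n) (g : Fin m → Vec n → Vec n) (xck : Vec n)
    (Tgt : Set (ℝ × Vec n)) (K : EReal) (Ψ : ℝ → Vec n → ℝ)
    (ℓ0 : Vec n → Vec q → ℝ) (ℓ1 : Vec n → Vec m → ℝ) (ℓhat1 : Vec n → ℝ → Vec m → ℝ)
    (hSets : HpSets C A Tgt K) (hReg : HpReg C A f g ℓ0 ℓhat1 Ψ)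
    (hrec : IsRecessionOf C ℓhat1 ℓ1)
    -- the given space-time process
    (St : ℝ) (w0t : ℝ → ℝ) (wt : ℝ → Vec m) (αt : ℝ → Vec q)
    (y0t : ℝ → ℝ) (yt : ℝ → Vec n) (βt : ℝ → ℝ)
    (hproc : IsSTProcess C A f g xck St w0t wt αt y0t yt βt)
    -- σ : [0,S] → [0,S̃] strictly increasing, surjective, bi-Lipschitz,
    -- with a.e. derivative σ'
    (S : ℝ) (hS : 0 < S) (σ σ' : ℝ → ℝ)
    (hmono : StrictMonoOn σ (Icc (0:ℝ) S))
    (hσ0 : σ 0 = 0) (hσS : σ S = St)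
    (hsurj : σ '' (Icc (0:ℝ) S) = Icc (0:ℝ) St)
    (hbilip : ∃ c L : ℝ, 0 < c ∧
      ∀ s₁ ∈ Icc (0:ℝ) S, ∀ s₂ ∈ Icc (0:ℝ) S,
        c * |s₁ - s₂| ≤ |σ s₁ - σ s₂| ∧ |σ s₁ - σ s₂| ≤ L * |s₁ - s₂|)
    (hderiv : ∀ᵐ s ∂(volume.restrict (Icc (0:ℝ) S)), HasDerivAt σ (σ' s) s) :
    IsSTProcess C A f g xck S
      (fun s => w0t (σ s) * σ' s) (fun s => σ' s • wt (σ s)) (fun s => αt (σ s))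
      (fun s => y0t (σ s)) (fun s => yt (σ s)) (fun s => βt (σ s)) ∧
    (STFeasible Tgt K St y0t yt βt ↔
      STFeasible Tgt K S (fun s => y0t (σ s)) (fun s => yt (σ s)) (fun s => βt (σ s))) ∧
    STCost Ψ ℓ0 ℓhat1 St w0t wt αt y0t yt
      = STCost Ψ ℓ0 ℓhat1 S (fun s => w0t (σ s) * σ' s) (fun s => σ' s • wt (σ s))
          (fun s => αt (σ s)) (fun s => y0t (σ s)) (fun s => yt (σ s)) ∧
    (IsSTLocalMin C A f g xck Tgt K Ψ ℓ0 ℓhat1 St w0t wt αt y0t yt βt ↔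
      IsSTLocalMin C A f g xck Tgt K Ψ ℓ0 ℓhat1 S
        (fun s => w0t (σ s) * σ' s) (fun s => σ' s • wt (σ s)) (fun s => αt (σ s))
        (fun s => y0t (σ s)) (fun s => yt (σ s)) (fun s => βt (σ s))) ∧
    (IsSTGlobalMin C A f g xck Tgt K Ψ ℓ0 ℓhat1 St w0t wt αt y0t yt βt ↔
      IsSTGlobalMin C A f g xck Tgt K Ψ ℓ0 ℓhat1 S
        (fun s => w0t (σ s) * σ' s) (fun s => σ' s • wt (σ s)) (fun s => αt (σ s))
        (fun s => y0t (σ s)) (fun s => yt (σ s)) (fun s => βt (σ s))) :=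
  spaceTime_reparameterization_equivalence_general C A f g xck Tgt K Ψ ℓ0 ℓ1 ℓhat1 hSets hrec St w0t
    wt αt y0t yt βt hproc S hS σ σ' hmono hσ0 hσS hbilip hderiv
end
end

section
/- Assume ℓ₁(x,·) is positively 1-homogeneous, so that ℓᵉ(x,w⁰,w,a) = ℓ₀(x,a)w⁰ + ℓ₁(x,w). Let (S̄, w̄⁰, w̄, ᾱ, ȳ⁰, ȳ, β̄) be a canonical extremal obeying the conditions of the First Order Maximum Principle with multiplier (p₀, p, π, λ). Then there exists a zero-measure set 𝒩 ⊂ [0,S̄] such that for every s ∈ [0,S̄]∖𝒩: H(ȳ(s), p₀, p(s), π, λ, w̄⁰(s), w̄(s), ᾱ(s)) = 𝐇(ȳ(s), p₀, p(s), π, λ) = max{𝐇^{dr}(ȳ(s), p₀, p(s), λ), 𝐇^{imp}(ȳ(s), p(s), π, λ)} = 0; w̄⁰(s)·[p₀ + p(s)·f(ȳ(s), ᾱ(s)) − λℓ₀(ȳ(s), ᾱ(s))] = 0; and p(s)·Σᵢ gᵢ(ȳ(s)) w̄ⁱ(s) + π|w̄(s)| − λℓ₁(ȳ(s), w̄(s))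 = 0. Moreover, for s ∈ [0,S̄]∖𝒩: (i) if 𝐇^{dr}(ȳ(s), p₀, p(s), λ) < 0 then w̄⁰(s) = 0 and p(s)·Σᵢ gᵢ(ȳ(s)) w̄ⁱ(s) + π − λℓ₁(ȳ(s), w̄(s)) = 𝐇^{imp}(ȳ(s), p(s), π, λ) = 0; (ii) if 𝐇^{imp}(ȳ(s), p(s), π, λ) < 0 then w̄(s) = 0 and p₀ + p(s)·f(ȳ(s), ᾱ(s)) − λℓ₀(ȳ(s), ᾱ(s)) = 𝐇^{dr}(ȳ(s), p₀, p(s), λ) = 0. -/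
/-!
For `w⁰ ≥ 0` and `w ∈ 𝒞`, `H` splits as `w⁰ · (p₀ + p·f − λℓ₀)` plus an impulse term in `w`
which is positively 1-homogeneous. On `W × A` this bounds `H` by the convex combination
`w⁰ 𝐇^{dr} + |w| 𝐇^{imp} ≤ max {𝐇^{dr}, 𝐇^{imp}}`, while the choices `w = 0` and `w⁰ = 0` give
`𝐇^{dr}, 𝐇^{imp} ≤ 𝐇 = 0`. Hence the maximum is `0`, and at the maximizing control the two
nonpositive summands of `H = 0` both vanish; the alternatives (i), (ii) follow at once.
-/

open MeasureTheory Set Filter Asymptotics Topology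
noncomputable section

variable {n m q : ℕ}

/-- The drift Hamiltonian `𝐇^{dr}(x,p₀,p,λ) = max_{a∈A} {p₀ + p·f(x,a) − λℓ₀(x,a)}`. -/
def Hdr (A : Set (Vec q)) (f : Vec n → Vec q → Vec n) (ℓ0 : Vec n → Vec q → ℝ)
    (x : Vec n) (p0 : ℝ) (p : Vec n) (lam : ℝ) : ℝ :=
  sSup { h : ℝ | ∃ a ∈ A, h = p0 + (inner ℝ p (f x a) : ℝ) - lam * ℓ0 x a }

/-- The impulse Hamiltonian
`𝐇^{imp}(x,p,π,λ) = max_{w∈𝒞,|w|=1} {p·Σᵢ gᵢ(x)wⁱ + π − λℓ₁(x,w)}`. -/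
def Himp (C : Set (Vec m)) (g : Fin m → Vec n → Vec n) (ℓ1 : Vec n → Vec m → ℝ)
    (x : Vec n) (p : Vec n) (pi lam : ℝ) : ℝ :=
  sSup { h : ℝ | ∃ w : Vec m, w ∈ C ∧ ‖w‖ = 1 ∧
    h = (inner ℝ p (∑ i, w i • g i x) : ℝ) + pi - lam * ℓ1 x w }

theorem exists_measure_zero_of_ae_restrict {α : Type*} [MeasurableSpace α] {μ : Measure α}
    {s : Set α} (hs : MeasurableSet s) {P : α → Prop} (h : ∀ᵐ x ∂μ.restrict s, P x) :
    ∃ N ⊆ s, μ N = 0 ∧ ∀ x ∈ s \ N, P x := by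
  refine ⟨{x | ¬ P x} ∩ s, inter_subset_right, ?_, fun x hx => ?_⟩
  · rw [← Measure.restrict_apply' hs]
    exact ae_iff.mp h
  · by_contra hPx
    exact hx.2 ⟨hPx, hx.1⟩

theorem zero_mem_of_isClosed_of_smul_mem {E : Type*} [NormedAddCommGroup E] [NormedSpace ℝ E]
    {C : Set E} (hC : IsClosed C) (hcone : ∀ ⦃c : ℝ⦄, 0 < c → ∀ ⦃x⦄, x ∈ C → c • x ∈ C)
    {v : E} (hv : v ∈ C) : (0 : E) ∈ C := by
  have hcont : Continuous fun c : ℝ => c • v := continuous_id.smul continuous_const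
  have hlim : Tendsto (fun c : ℝ => c • v) (𝓝[>] 0) (𝓝 0) := by
    simpa using (hcont.tendsto 0).mono_left nhdsWithin_le_nhds
  exact hC.mem_of_tendsto hlim (eventually_nhdsWithin_of_forall fun c hc => hcone hc hv)

section Hamiltonians

variable {C : Set (Vec m)} {A : Set (Vec q)}
  {f : Vec n → Vec q → Vec n} {g : Fin m → Vec n → Vec n}
  {ℓ0 : Vec n → Vec q → ℝ} {ℓ1 : Vec n → Vec m → ℝ} {ℓhat1 : Vec n → ℝ → Vec m → ℝ}
  {x : Vec n} {p0 : ℝ} {p : Vec n} {pi lam : ℝ}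

def driftTerm (f : Vec n → Vec q → Vec n) (ℓ0 : Vec n → Vec q → ℝ)
    (x : Vec n) (p0 : ℝ) (p : Vec n) (lam : ℝ) (a : Vec q) : ℝ :=
  p0 + (inner ℝ p (f x a) : ℝ) - lam * ℓ0 x a

def impulseTerm (g : Fin m → Vec n → Vec n) (ℓ1 : Vec n → Vec m → ℝ)
    (x : Vec n) (p : Vec n) (pi lam : ℝ) (w : Vec m) : ℝ :=
  (inner ℝ p (∑ i, w i • g i x) : ℝ) + pi * ‖w‖ - lam * ℓ1 x w

theorem Ham_eq_driftTerm_add_impulseTerm {w0 : ℝ} {w : Vec m} {a : Vec q}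
    (hform : ℓhat1 x w0 w = ℓ1 x w) :
    Ham f g ℓ0 ℓhat1 x p0 p pi lam w0 w a
      = w0 * driftTerm f ℓ0 x p0 p lam a + impulseTerm g ℓ1 x p pi lam w := by
  simp only [Ham, Fe, extL, hform, driftTerm, impulseTerm, inner_add_right,
    real_inner_smul_right]
  ring

theorem impulseTerm_smul (hhom : ∀ r : ℝ, 0 < r → ∀ w : Vec m, ℓ1 x (r • w) = r * ℓ1 x w)
    {r : ℝ} (hr : 0 < r) (w : Vec m) :
    impulseTerm g ℓ1 x p pi lam (r • w) = r * impulseTerm g ℓ1 x p pi lam w := by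
  have hsum : ∑ i, (r • w) i • g i x = r • ∑ i, w i • g i x := by
    simp only [Finset.smul_sum, PiLp.smul_apply, smul_eq_mul, mul_smul]
  simp only [impulseTerm, hsum, real_inner_smul_right, norm_smul, Real.norm_of_nonneg hr.le,
    hhom r hr w]
  ring

theorem impulseTerm_zero (hhom : ∀ r : ℝ, 0 < r → ∀ w : Vec m, ℓ1 x (r • w) = r * ℓ1 x w) :
    impulseTerm g ℓ1 x p pi lam 0 = 0 := by
  have h := impulseTerm_smul (g := g) (p := p) (pi := pi) (lam := lam) hhom two_pos 0
  rw [smul_zero] at h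
  linarith

theorem impulseTerm_le_norm_mul
    (hhom : ∀ r : ℝ, 0 < r → ∀ w : Vec m, ℓ1 x (r • w) = r * ℓ1 x w)
    (hcone : ∀ ⦃c : ℝ⦄, 0 < c → ∀ ⦃w⦄, w ∈ C → c • w ∈ C) {c : ℝ}
    (hunit : ∀ v ∈ C, ‖v‖ = 1 → impulseTerm g ℓ1 x p pi lam v ≤ c) {w : Vec m} (hw : w ∈ C) :
    impulseTerm g ℓ1 x p pi lam w ≤ ‖w‖ * c := by
  rcases eq_or_ne w 0 with rfl | hne
  · simp [impulseTerm_zero hhom]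
  have hpos : 0 < ‖w‖ := norm_pos_iff.mpr hne
  calc impulseTerm g ℓ1 x p pi lam w
      = ‖w‖ * impulseTerm g ℓ1 x p pi lam (‖w‖⁻¹ • w) := by
        rw [← impulseTerm_smul hhom hpos, smul_inv_smul₀ hpos.ne']
    _ ≤ ‖w‖ * c := by
        gcongr
        exact hunit _ (hcone (inv_pos.mpr hpos) hw) (norm_smul_inv_norm hne)

theorem driftTerm_le_Hdr (hA : IsCompact A) (hf : Continuous (f x)) (hℓ0 : Continuous (ℓ0 x)) :
    ∀ a ∈ A, driftTerm f ℓ0 x p0 p lam a ≤ Hdr A f ℓ0 x p0 p lam := by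
  intro a ha
  have hcont : Continuous (driftTerm f ℓ0 x p0 p lam) := by
    unfold driftTerm; fun_prop
  obtain ⟨M, hM⟩ := hA.bddAbove_image hcont.continuousOn
  exact le_csSup ⟨M, by rintro _ ⟨a', ha', rfl⟩; exact hM ⟨a', ha', rfl⟩⟩ ⟨a, ha, rfl⟩

theorem impulseTerm_le_Himp (hC : IsClosed C) (hℓ1 : ContinuousOn (ℓ1 x) C) :
    ∀ v ∈ C, ‖v‖ = 1 → impulseTerm g ℓ1 x p pi lam v ≤ Himp C g ℓ1 x p pi lam := by
  intro v hv hv1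
  have hcont : ContinuousOn (impulseTerm g ℓ1 x p pi lam) (C ∩ Metric.sphere 0 1) := by
    unfold impulseTerm
    exact ((by fun_prop : Continuous fun v : Vec m => (inner ℝ p (∑ i, v i • g i x) : ℝ)
      + pi * ‖v‖).continuousOn).sub (continuousOn_const.mul (hℓ1.mono inter_subset_left))
  obtain ⟨M, hM⟩ := ((isCompact_sphere 0 1).inter_left hC).bddAbove_image hcont
  have hunit : ∀ u : Vec m, ‖u‖ = 1 →
      (inner ℝ p (∑ i, u i • g i x) : ℝ) + pi - lam * ℓ1 x u = impulseTerm g ℓ1 x p pi lam u :=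
    fun u hu => by rw [impulseTerm, hu, mul_one]
  refine (hunit v hv1).symm.le.trans (le_csSup ⟨M, ?_⟩ ⟨v, hv, hv1, rfl⟩)
  rintro _ ⟨u, hu, hu1, rfl⟩
  exact (hunit u hu1).le.trans (hM ⟨u, ⟨hu, mem_sphere_zero_iff_norm.mpr hu1⟩, rfl⟩)

theorem HpReg.continuousOn_ℓ1 {Ψ : ℝ → Vec n → ℝ} (hReg : HpReg C A f g ℓ0 ℓhat1 Ψ)
    (hform : ∀ w ∈ C, ℓhat1 x 0 w = ℓ1 x w) : ContinuousOn (ℓ1 x) C :=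
  (hReg.hl1_cont.comp (f := fun w : Vec m => (x, (0 : ℝ), w)) (by fun_prop)
    fun _ hw => ⟨mem_univ _, mem_Ici.mpr le_rfl, hw⟩).congr
    fun w hw => (hform w hw).symm

theorem Ham_le_max_of_le (hform : ∀ w0 : ℝ, 0 ≤ w0 → ∀ w ∈ C, ℓhat1 x w0 w = ℓ1 x w)
    (hhom : ∀ r : ℝ, 0 < r → ∀ w : Vec m, ℓ1 x (r • w) = r * ℓ1 x w)
    (hcone : ∀ ⦃c : ℝ⦄, 0 < c → ∀ ⦃w⦄, w ∈ C → c • w ∈ C) {cD cI : ℝ}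
    (hdr : ∀ a ∈ A, driftTerm f ℓ0 x p0 p lam a ≤ cD)
    (himp : ∀ v ∈ C, ‖v‖ = 1 → impulseTerm g ℓ1 x p pi lam v ≤ cI)
    {w0 : ℝ} {w : Vec m} {a : Vec q} (hw0 : 0 ≤ w0) (hw : w ∈ C) (hsum : w0 + ‖w‖ = 1)
    (ha : a ∈ A) :
    Ham f g ℓ0 ℓhat1 x p0 p pi lam w0 w a ≤ max cD cI := by
  rw [Ham_eq_driftTerm_add_impulseTerm (hform w0 hw0 w hw)]
  calc w0 * driftTerm f ℓ0 x p0 p lam a + impulseTerm g ℓ1 x p pi lam w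
      ≤ w0 * max cD cI + ‖w‖ * max cD cI := by
        gcongr
        · exact (hdr a ha).trans (le_max_left _ _)
        · exact impulseTerm_le_norm_mul hhom hcone
            (fun v hv hv1 => (himp v hv hv1).trans (le_max_right _ _)) hw
    _ = max cD cI := by rw [← add_mul, hsum, one_mul]

theorem Ham_le_bigH (hform : ∀ w0 : ℝ, 0 ≤ w0 → ∀ w ∈ C, ℓhat1 x w0 w = ℓ1 x w)
    (hhom : ∀ r : ℝ, 0 < r → ∀ w : Vec m, ℓ1 x (r • w) = r * ℓ1 x w)
    (hcone : ∀ ⦃c : ℝ⦄, 0 < c → ∀ ⦃w⦄, w ∈ C → c • w ∈ C) {cD cI : ℝ}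
    (hdr : ∀ a ∈ A, driftTerm f ℓ0 x p0 p lam a ≤ cD)
    (himp : ∀ v ∈ C, ‖v‖ = 1 → impulseTerm g ℓ1 x p pi lam v ≤ cI)
    {w0 : ℝ} {w : Vec m} {a : Vec q} (hw0 : 0 ≤ w0) (hw : w ∈ C) (hsum : w0 + ‖w‖ = 1)
    (ha : a ∈ A) :
    Ham f g ℓ0 ℓhat1 x p0 p pi lam w0 w a ≤ bigH C A f g ℓ0 ℓhat1 x p0 p pi lam := by
  refine le_csSup ⟨max cD cI, ?_⟩ ⟨w0, w, a, hw0, hw, hsum, ha, rfl⟩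
  rintro _ ⟨w0', w', a', hw0', hw', hsum', ha', rfl⟩
  exact Ham_le_max_of_le hform hhom hcone hdr himp hw0' hw' hsum' ha'

theorem max_Hdr_Himp_eq_zero (hform : ∀ w0 : ℝ, 0 ≤ w0 → ∀ w ∈ C, ℓhat1 x w0 w = ℓ1 x w)
    (hhom : ∀ r : ℝ, 0 < r → ∀ w : Vec m, ℓ1 x (r • w) = r * ℓ1 x w)
    (hcone : ∀ ⦃c : ℝ⦄, 0 < c → ∀ ⦃w⦄, w ∈ C → c • w ∈ C) (h0C : (0 : Vec m) ∈ C)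
    (hdr : ∀ a ∈ A, driftTerm f ℓ0 x p0 p lam a ≤ Hdr A f ℓ0 x p0 p lam)
    (himp : ∀ v ∈ C, ‖v‖ = 1 → impulseTerm g ℓ1 x p pi lam v ≤ Himp C g ℓ1 x p pi lam)
    {w0 : ℝ} {w : Vec m} {a : Vec q} (hw0 : 0 ≤ w0) (hw : w ∈ C) (hsum : w0 + ‖w‖ = 1)
    (ha : a ∈ A)
    (hmax : Ham f g ℓ0 ℓhat1 x p0 p pi lam w0 w a = bigH C A f g ℓ0 ℓhat1 x p0 p pi lam)
    (hzero : bigH C A f g ℓ0 ℓhat1 x p0 p pi lam = 0) :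
    max (Hdr A f ℓ0 x p0 p lam) (Himp C g ℓ1 x p pi lam) = 0 := by
  have hle : ∀ w0' w' a', 0 ≤ w0' → w' ∈ C → w0' + ‖w'‖ = 1 → a' ∈ A →
      w0' * driftTerm f ℓ0 x p0 p lam a' + impulseTerm g ℓ1 x p pi lam w' ≤ 0 :=
    fun w0' w' a' hw0' hw' hsum' ha' => by
      rw [← Ham_eq_driftTerm_add_impulseTerm (hform w0' hw0' w' hw'), ← hzero]
      exact Ham_le_bigH hform hhom hcone hdr himp hw0' hw' hsum' ha'
  have hHdr : Hdr A f ℓ0 x p0 p lam ≤ 0 := Real.sSup_nonpos <| by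
    rintro _ ⟨a', ha', rfl⟩
    have h := hle 1 0 a' zero_le_one h0C (by simp) ha'
    rwa [one_mul, impulseTerm_zero hhom, add_zero] at h
  -- `Real.sSup_nonpos` also covers `C ∩ sphere = ∅`, where `Himp` is the junk value `sSup ∅ = 0`.
  have hHimp : Himp C g ℓ1 x p pi lam ≤ 0 := Real.sSup_nonpos <| by
    rintro _ ⟨v, hv, hv1, rfl⟩
    simpa [impulseTerm, hv1] using hle 0 v a le_rfl hv (by simp [hv1]) ha
  refine le_antisymm (max_le hHdr hHimp) ?_
  rw [← hzero, ← hmax]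
  exact Ham_le_max_of_le hform hhom hcone hdr himp hw0 hw hsum ha

theorem hamiltonian_conditions_of_Ham_eq_bigH_eq_zero
    (hform : ∀ w0 : ℝ, 0 ≤ w0 → ∀ w ∈ C, ℓhat1 x w0 w = ℓ1 x w)
    (hhom : ∀ r : ℝ, 0 < r → ∀ w : Vec m, ℓ1 x (r • w) = r * ℓ1 x w)
    (hcone : ∀ ⦃c : ℝ⦄, 0 < c → ∀ ⦃w⦄, w ∈ C → c • w ∈ C) (h0C : (0 : Vec m) ∈ C)
    (hdr : ∀ a ∈ A, driftTerm f ℓ0 x p0 p lam a ≤ Hdr A f ℓ0 x p0 p lam)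
    (himp : ∀ v ∈ C, ‖v‖ = 1 → impulseTerm g ℓ1 x p pi lam v ≤ Himp C g ℓ1 x p pi lam)
    {w0 : ℝ} {w : Vec m} {a : Vec q} (hw0 : 0 ≤ w0) (hw : w ∈ C) (hsum : w0 + ‖w‖ = 1)
    (ha : a ∈ A)
    (hmax : Ham f g ℓ0 ℓhat1 x p0 p pi lam w0 w a = bigH C A f g ℓ0 ℓhat1 x p0 p pi lam)
    (hzero : bigH C A f g ℓ0 ℓhat1 x p0 p pi lam = 0) :
    bigH C A f g ℓ0 ℓhat1 x p0 p pi lam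
        = max (Hdr A f ℓ0 x p0 p lam) (Himp C g ℓ1 x p pi lam) ∧
      bigH C A f g ℓ0 ℓhat1 x p0 p pi lam = 0 ∧
      w0 * driftTerm f ℓ0 x p0 p lam a = 0 ∧
      impulseTerm g ℓ1 x p pi lam w = 0 ∧
      (Hdr A f ℓ0 x p0 p lam < 0 →
        w0 = 0 ∧
        (inner ℝ p (∑ i, w i • g i x) : ℝ) + pi - lam * ℓ1 x w = Himp C g ℓ1 x p pi lam ∧
        Himp C g ℓ1 x p pi lam = 0) ∧
      (Himp C g ℓ1 x p pi lam < 0 →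
        w = 0 ∧
        driftTerm f ℓ0 x p0 p lam a = Hdr A f ℓ0 x p0 p lam ∧
        Hdr A f ℓ0 x p0 p lam = 0) := by
  have hmax0 := max_Hdr_Himp_eq_zero hform hhom hcone h0C hdr himp hw0 hw hsum ha hmax hzero
  have hHdr : Hdr A f ℓ0 x p0 p lam ≤ 0 := hmax0 ▸ le_max_left _ _
  have hHimp : Himp C g ℓ1 x p pi lam ≤ 0 := hmax0 ▸ le_max_right _ _
  set D := driftTerm f ℓ0 x p0 p lam
  set ψ := impulseTerm g ℓ1 x p pi lam with hψ
  have hDa : D a ≤ 0 := (hdr a ha).trans hHdr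
  have hψw : ψ w ≤ ‖w‖ * Himp C g ℓ1 x p pi lam := impulseTerm_le_norm_mul hhom hcone himp hw
  have hsum0 : w0 * D a + ψ w = 0 := by
    rw [← Ham_eq_driftTerm_add_impulseTerm (hform w0 hw0 w hw), hmax, hzero]
  -- both summands of `H = 0` are nonpositive
  have hdrift : w0 * D a = 0 := by
    nlinarith [mul_nonpos_of_nonneg_of_nonpos hw0 hDa,
      mul_nonpos_of_nonneg_of_nonpos (norm_nonneg w) hHimp]
  have himpulse : ψ w = 0 := by linarith
  refine ⟨hzero.trans hmax0.symm, hzero, hdrift, himpulse, fun hneg => ?_, fun hneg => ?_⟩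
  · have hw00 : w0 = 0 := (mul_eq_zero.mp hdrift).resolve_right ((hdr a ha).trans_lt hneg).ne
    have hw1 : ‖w‖ = 1 := by linarith
    have hHimp0 : Himp C g ℓ1 x p pi lam = 0 := le_antisymm hHimp (himpulse ▸ himp w hw hw1)
    refine ⟨hw00, ?_, hHimp0⟩
    rw [hHimp0, ← himpulse, hψ, impulseTerm, hw1, mul_one]
  · have hw00 : w = 0 := by
      by_contra hne
      have := mul_neg_of_pos_of_neg (norm_pos_iff.mpr hne) hneg
      linarith
    have hDa0 : D a = 0 := by simpa [show w0 = 1 by simpa [hw00] using hsum] using hdrift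
    have hHdr0 : Hdr A f ℓ0 x p0 p lam = 0 := le_antisymm hHdr (hDa0 ▸ hdr a ha)
    exact ⟨hw00, hDa0.trans hHdr0.symm, hHdr0⟩

end Hamiltonians

theorem canonical_extremal_drift_impulse_hamiltonians_general
    {n m q : ℕ} (C : Set (Vec m)) (A : Set (Vec q))
    (f : Vec n → Vec q → Vec n) (g : Fin m → Vec n → Vec n) (xck : Vec n)
    (Tgt : Set (ℝ × Vec n)) (K : EReal) (Ψ : ℝ → Vec n → ℝ)
    (ℓ0 : Vec n → Vec q → ℝ) (ℓ1 : Vec n → Vec m → ℝ) (ℓhat1 : Vec n → ℝ → Vec m → ℝ)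
    (hSets : HpSets C A Tgt K) (hReg : HpReg C A f g ℓ0 ℓhat1 Ψ)
    -- positive 1-homogeneity of ℓ₁(x,·) and the ensuing form of ℓᵉ
    (hhom : ∀ (x : Vec n) (r : ℝ), 0 < r → ∀ w : Vec m, ℓ1 x (r • w) = r * ℓ1 x w)
    (hform : ∀ (x : Vec n) (w0 : ℝ), 0 ≤ w0 → ∀ w ∈ C, ℓhat1 x w0 w = ℓ1 x w)
    -- the canonical extremal and its multiplier
    (S : ℝ) (w0 : ℝ → ℝ) (w : ℝ → Vec m) (α : ℝ → Vec q)
    (y0 : ℝ → ℝ) (y : ℝ → Vec n) (β : ℝ → ℝ)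
    (hproc : IsSTProcess C A f g xck S w0 w α y0 y β)
    (hcan : STCanonical S w0 w)
    (Γ : Set (ℝ × Vec n))
    (p0 : ℝ) (p : ℝ → Vec n) (pi lam : ℝ)
    (hFOMP : FOMP C A f g ℓ0 ℓhat1 Ψ K S w0 w α y0 y β Γ p0 p pi lam) :
    ∃ N : Set ℝ, N ⊆ Icc (0:ℝ) S ∧ volume N = 0 ∧
      ∀ s ∈ Icc (0:ℝ) S \ N,
        (Ham f g ℓ0 ℓhat1 (y s) p0 (p s) pi lam (w0 s) (w s) (α s)
            = bigH C A f g ℓ0 ℓhat1 (y s) p0 (p s) pi lam) ∧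
        (bigH C A f g ℓ0 ℓhat1 (y s) p0 (p s) pi lam
            = max (Hdr A f ℓ0 (y s) p0 (p s) lam) (Himp C g ℓ1 (y s) (p s) pi lam)) ∧
        (bigH C A f g ℓ0 ℓhat1 (y s) p0 (p s) pi lam = 0) ∧
        (w0 s * (p0 + (inner ℝ (p s) (f (y s) (α s)) : ℝ) - lam * ℓ0 (y s) (α s)) = 0) ∧
        ((inner ℝ (p s) (∑ i, w s i • g i (y s)) : ℝ) + pi * ‖w s‖
            - lam * ℓ1 (y s) (w s) = 0) ∧
        (Hdr A f ℓ0 (y s) p0 (p s) lam < 0 →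
          w0 s = 0 ∧
          (inner ℝ (p s) (∑ i, w s i • g i (y s)) : ℝ) + pi - lam * ℓ1 (y s) (w s)
            = Himp C g ℓ1 (y s) (p s) pi lam ∧
          Himp C g ℓ1 (y s) (p s) pi lam = 0) ∧
        (Himp C g ℓ1 (y s) (p s) pi lam < 0 →
          w s = 0 ∧
          p0 + (inner ℝ (p s) (f (y s) (α s)) : ℝ) - lam * ℓ0 (y s) (α s)
            = Hdr A f ℓ0 (y s) p0 (p s) lam ∧
          Hdr A f ℓ0 (y s) p0 (p s) lam = 0) := by
  obtain ⟨-, -, -, -, -, -, -, hmaxHam, hzero⟩ := hFOMP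
  obtain ⟨N, hNsub, hN0, hN⟩ := exists_measure_zero_of_ae_restrict measurableSet_Icc
    (hproc.mem_ae.and (hcan.and hmaxHam))
  refine ⟨N, hNsub, hN0, fun s hs => ?_⟩
  obtain ⟨⟨hw0, hwC, hαA⟩, hsum, hmax⟩ := hN s hs
  exact ⟨hmax, hamiltonian_conditions_of_Ham_eq_bigH_eq_zero (hform (y s)) (hhom (y s))
    hSets.hC_cone (zero_mem_of_isClosed_of_smul_mem hSets.hC_closed hSets.hC_cone hwC)
    (driftTerm_le_Hdr hSets.hA (hReg.hf_cont.comp (.prodMk_right (y s)))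
      (hReg.hl0_cont.comp (.prodMk_right (y s))))
    (impulseTerm_le_Himp hSets.hC_closed
      (hReg.continuousOn_ℓ1 fun w hw => hform (y s) 0 le_rfl w hw))
    hw0 hwC hsum hαA hmax (hzero s hs.1)⟩

/-- Assume `ℓ₁(x,·)` is positively 1-homogeneous, so that
`ℓᵉ(x,w⁰,w,a) = ℓ₀(x,a)w⁰ + ℓ₁(x,w)`.  For a canonical extremal with multiplier
`(p₀,p,π,λ)` there is a null set `𝒩 ⊆ [0,S̄]` outside of which the stated identities
and the alternatives (i), (ii) hold. -/
theorem canonical_extremal_drift_impulse_hamiltonians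
    {n m q : ℕ} (C : Set (Vec m)) (A : Set (Vec q))
    (f : Vec n → Vec q → Vec n) (g : Fin m → Vec n → Vec n) (xck : Vec n)
    (Tgt : Set (ℝ × Vec n)) (K : EReal) (Ψ : ℝ → Vec n → ℝ)
    (ℓ0 : Vec n → Vec q → ℝ) (ℓ1 : Vec n → Vec m → ℝ) (ℓhat1 : Vec n → ℝ → Vec m → ℝ)
    (hSets : HpSets C A Tgt K) (hReg : HpReg C A f g ℓ0 ℓhat1 Ψ)
    (hrec : IsRecessionOf C ℓhat1 ℓ1)
    -- positive 1-homogeneity of ℓ₁(x,·) and the ensuing form of ℓᵉ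
    (hhom : ∀ (x : Vec n) (r : ℝ), 0 < r → ∀ w : Vec m, ℓ1 x (r • w) = r * ℓ1 x w)
    (hform : ∀ (x : Vec n) (w0 : ℝ), 0 ≤ w0 → ∀ w ∈ C, ℓhat1 x w0 w = ℓ1 x w)
    -- the canonical extremal and its multiplier
    (S : ℝ) (w0 : ℝ → ℝ) (w : ℝ → Vec m) (α : ℝ → Vec q)
    (y0 : ℝ → ℝ) (y : ℝ → Vec n) (β : ℝ → ℝ)
    (hproc : IsSTProcess C A f g xck S w0 w α y0 y β)
    (hcan : STCanonical S w0 w)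
    (Γ : Set (ℝ × Vec n)) (hΓ : IsBoltyanskiCone Tgt (y0 S, y S) Γ)
    (p0 : ℝ) (p : ℝ → Vec n) (pi lam : ℝ)
    (hFOMP : FOMP C A f g ℓ0 ℓhat1 Ψ K S w0 w α y0 y β Γ p0 p pi lam) :
    ∃ N : Set ℝ, N ⊆ Icc (0:ℝ) S ∧ volume N = 0 ∧
      ∀ s ∈ Icc (0:ℝ) S \ N,
        (Ham f g ℓ0 ℓhat1 (y s) p0 (p s) pi lam (w0 s) (w s) (α s)
            = bigH C A f g ℓ0 ℓhat1 (y s) p0 (p s) pi lam) ∧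
        (bigH C A f g ℓ0 ℓhat1 (y s) p0 (p s) pi lam
            = max (Hdr A f ℓ0 (y s) p0 (p s) lam) (Himp C g ℓ1 (y s) (p s) pi lam)) ∧
        (bigH C A f g ℓ0 ℓhat1 (y s) p0 (p s) pi lam = 0) ∧
        (w0 s * (p0 + (inner ℝ (p s) (f (y s) (α s)) : ℝ) - lam * ℓ0 (y s) (α s)) = 0) ∧
        ((inner ℝ (p s) (∑ i, w s i • g i (y s)) : ℝ) + pi * ‖w s‖
            - lam * ℓ1 (y s) (w s) = 0) ∧
        (Hdr A f ℓ0 (y s) p0 (p s) lam < 0 →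
          w0 s = 0 ∧
          (inner ℝ (p s) (∑ i, w s i • g i (y s)) : ℝ) + pi - lam * ℓ1 (y s) (w s)
            = Himp C g ℓ1 (y s) (p s) pi lam ∧
          Himp C g ℓ1 (y s) (p s) pi lam = 0) ∧
        (Himp C g ℓ1 (y s) (p s) pi lam < 0 →
          w s = 0 ∧
          p0 + (inner ℝ (p s) (f (y s) (α s)) : ℝ) - lam * ℓ0 (y s) (α s)
            = Hdr A f ℓ0 (y s) p0 (p s) lam ∧
          Hdr A f ℓ0 (y s) p0 (p s) lam = 0) :=
  canonical_extremal_drift_impulse_hamiltonians_general C A f g xck Tgt K Ψ ℓ0 ℓ1 ℓhat1 hSets hReg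
    hhom hform S w0 w α y0 y β hproc hcan Γ p0 p pi lam hFOMP
end
end

section
/- Let (S̄, w̄⁰, w̄, ᾱ, ȳ⁰, ȳ, β̄) be a canonical extremal for the space-time problem with multiplier (p₀, p, π, λ). If π = 0 and λ·ℓᵉ(ȳ(s), 0, ±𝐞ᵢ, a) = 0 for all s ∈ [0,S̄] and all i = 1,…,m₁ (these quantities not depending on a ∈ A), then p(s)·gᵢ(ȳ(s)) = 0 for all s ∈ [0,S̄] and all i = 1,…,m₁. -/
open MeasureTheory Set Filter Asymptotics Topology
noncomputable section

variable {n m q : ℕ}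

/-- The cone `𝒞 ⊆ ℝ^{m₁+m₂}` splits as `𝒞₁ × 𝒞₂`, where `𝒞₁ ⊆ ℝ^{m₁}` is a closed
cone containing the coordinate lines `ℝ𝐞ᵢ` and `𝒞₂ ⊆ ℝ^{m₂}` is a closed cone
containing no straight lines. -/
def SplitCone (m₁ m₂ : ℕ) (C : Set (Vec (m₁ + m₂))) : Prop :=
  ∃ (C1 : Set (Vec m₁)) (C2 : Set (Vec m₂)),
    IsClosed C1 ∧ (∀ ⦃r : ℝ⦄, 0 < r → ∀ ⦃x⦄, x ∈ C1 → r • x ∈ C1) ∧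
    (∀ (i : Fin m₁) (r : ℝ), (r • EuclideanSpace.single i (1:ℝ)) ∈ C1) ∧
    IsClosed C2 ∧ (∀ ⦃r : ℝ⦄, 0 < r → ∀ ⦃x⦄, x ∈ C2 → r • x ∈ C2) ∧
    (∀ v : Vec m₂, (∀ r : ℝ, r • v ∈ C2) → v = 0) ∧
    C = { w : Vec (m₁ + m₂) |
      (WithLp.toLp 2 (fun i => w (Fin.castAdd m₂ i)) : Vec m₁) ∈ C1 ∧
      (WithLp.toLp 2 (fun i => w (Fin.natAdd m₁ i)) : Vec m₂) ∈ C2 }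

/-!
With `π = 0` and the Lagrangian term switched off, the Hamiltonian at the impulsive controls
`(w⁰, w) = (0, ±𝐞ᵢ)` equals `±p·gᵢ(ȳ)`. Both controls lie in `W`, since `𝒞₁` contains the
coordinate lines and the closed cone `𝒞₂` contains `0`, so both values are at most `𝐇 = 0`.
Comparing with `sSup` needs the values of `H` to be bounded above (otherwise `sSup` is the junk
value `0`), which holds because `H` is continuous on the compact set `W × A`.
-/

/-- The values of `H` over `W × A`; `𝐇` is their supremum. -/
def hamValues (C : Set (Vec m)) (A : Set (Vec q))
    (f : Vec n → Vec q → Vec n) (g : Fin m → Vec n → Vec n)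
    (ℓ0 : Vec n → Vec q → ℝ) (ℓhat1 : Vec n → ℝ → Vec m → ℝ)
    (x : Vec n) (p0 : ℝ) (p : Vec n) (pi lam : ℝ) : Set ℝ :=
  { h : ℝ | ∃ (w0 : ℝ) (w : Vec m) (a : Vec q),
    0 ≤ w0 ∧ w ∈ C ∧ w0 + ‖w‖ = 1 ∧ a ∈ A ∧
    h = Ham f g ℓ0 ℓhat1 x p0 p pi lam w0 w a }

/-- The set `W × A`. -/
def controlSet (C : Set (Vec m)) (A : Set (Vec q)) : Set (ℝ × Vec m × Vec q) :=
  { z | 0 ≤ z.1 ∧ z.2.1 ∈ C ∧ z.1 + ‖z.2.1‖ = 1 ∧ z.2.2 ∈ A }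

theorem zero_mem_of_isClosed_of_smul_mem_s7 {E : Type*} [TopologicalSpace E] [AddCommGroup E]
    [Module ℝ E] [ContinuousSMul ℝ E] {K : Set E} (hK : IsClosed K)
    (hcone : ∀ ⦃r : ℝ⦄, 0 < r → ∀ ⦃x⦄, x ∈ K → r • x ∈ K) {x : E} (hx : x ∈ K) :
    (0 : E) ∈ K := by
  have hlim : Tendsto (fun r : ℝ => r • x) (𝓝[>] 0) (𝓝 0) := by
    have hcont : Continuous fun r : ℝ => r • x := by fun_prop
    simpa using (hcont.tendsto 0).mono_left nhdsWithin_le_nhds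
  exact hK.mem_of_tendsto hlim (eventually_nhdsWithin_of_forall fun r hr => hcone hr hx)

theorem SplitCone.smul_single_mem {m₁ m₂ : ℕ} {C : Set (Vec (m₁ + m₂))}
    (hsplit : SplitCone m₁ m₂ C) (hC : C.Nonempty) (i : Fin m₁) (r : ℝ) :
    r • EuclideanSpace.single (Fin.castAdd m₂ i) (1 : ℝ) ∈ C := by
  obtain ⟨C1, C2, -, -, hC1lines, hC2closed, hC2cone, -, rfl⟩ := hsplit
  obtain ⟨w, -, hw⟩ := hC
  refine ⟨?_, ?_⟩
  · convert hC1lines i r using 1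
    ext j
    simp [PiLp.single_apply, Fin.ext_iff]
  · convert zero_mem_of_isClosed_of_smul_mem_s7 hC2closed hC2cone hw using 1
    ext j
    have hne : Fin.natAdd m₁ j ≠ Fin.castAdd m₂ i := by
      simp only [ne_eq, Fin.ext_iff, Fin.val_natAdd, Fin.val_castAdd]
      omega
    simp [hne]

section Extremal

variable {C : Set (Vec m)} {A : Set (Vec q)}
  {f : Vec n → Vec q → Vec n} {g : Fin m → Vec n → Vec n}
  {ℓ0 : Vec n → Vec q → ℝ} {ℓhat1 : Vec n → ℝ → Vec m → ℝ}

theorem IsSTProcess.exists_mem {xck : Vec n} {S : ℝ} {w0 : ℝ → ℝ} {w : ℝ → Vec m}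
    {α : ℝ → Vec q} {y0 : ℝ → ℝ} {y : ℝ → Vec n} {β : ℝ → ℝ}
    (hproc : IsSTProcess C A f g xck S w0 w α y0 y β) :
    ∃ t, 0 ≤ w0 t ∧ w t ∈ C ∧ α t ∈ A := by
  have : (ae (volume.restrict (Icc (0 : ℝ) S))).NeBot :=
    ae_restrict_neBot.2 (by simp [hproc.hS])
  exact hproc.mem_ae.exists

theorem FOMP.bigH_eq_zero {Ψ : ℝ → Vec n → ℝ} {K : EReal} {S : ℝ} {w0 : ℝ → ℝ}
    {w : ℝ → Vec m} {α : ℝ → Vec q} {y0 : ℝ → ℝ} {y : ℝ → Vec n} {β : ℝ → ℝ}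
    {Γ : Set (ℝ × Vec n)} {p0 : ℝ} {p : ℝ → Vec n} {pi lam : ℝ}
    (h : FOMP C A f g ℓ0 ℓhat1 Ψ K S w0 w α y0 y β Γ p0 p pi lam) {s : ℝ} (hs : s ∈ Icc 0 S) :
    bigH C A f g ℓ0 ℓhat1 (y s) p0 (p s) pi lam = 0 :=
  h.2.2.2.2.2.2.2.2 s hs

theorem isCompact_controlSet (hC : IsClosed C) (hA : IsCompact A) :
    IsCompact (controlSet C A) := by
  refine ((isCompact_Icc (a := (0 : ℝ)) (b := 1)).prod
    ((isCompact_closedBall (0 : Vec m) 1).prod hA)).of_isClosed_subset ?_ ?_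
  · exact (isClosed_le continuous_const continuous_fst).inter
      ((hC.preimage (by fun_prop)).inter
        ((isClosed_eq (by fun_prop) continuous_const).inter (hA.isClosed.preimage (by fun_prop))))
  · rintro ⟨w0, w, a⟩ ⟨hw0, -, hsum, ha⟩
    have := norm_nonneg w
    exact ⟨⟨hw0, by linarith⟩, mem_closedBall_zero_iff.2 (by linarith), ha⟩

variable {x : Vec n}

theorem continuousOn_ham (hf : Continuous (f x)) (hℓ0 : Continuous (ℓ0 x))
    (hℓhat1 : ContinuousOn (fun z : ℝ × Vec m => ℓhat1 x z.1 z.2) (Ici 0 ×ˢ C))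
    (p0 : ℝ) (p : Vec n) (pi lam : ℝ) :
    ContinuousOn (fun z : ℝ × Vec m × Vec q => Ham f g ℓ0 ℓhat1 x p0 p pi lam z.1 z.2.1 z.2.2)
      (controlSet C A) := by
  have hℓhat1' : ContinuousOn (fun z : ℝ × Vec m × Vec q => ℓhat1 x z.1 z.2.1)
      (controlSet C A) :=
    hℓhat1.comp (f := fun z : ℝ × Vec m × Vec q => (z.1, z.2.1)) (by fun_prop)
      fun _ hz => ⟨hz.1, hz.2.1⟩
  simp only [Ham, extL, Fe]
  exact ContinuousOn.sub (Continuous.continuousOn (by fun_prop))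
    (continuousOn_const.mul ((Continuous.continuousOn (by fun_prop)).add hℓhat1'))

theorem bddAbove_hamValues (hf : Continuous (f x)) (hℓ0 : Continuous (ℓ0 x))
    (hℓhat1 : ContinuousOn (fun z : ℝ × Vec m => ℓhat1 x z.1 z.2) (Ici 0 ×ˢ C))
    (hC : IsClosed C) (hA : IsCompact A)
    (p0 : ℝ) (p : Vec n) (pi lam : ℝ) :
    BddAbove (hamValues C A f g ℓ0 ℓhat1 x p0 p pi lam) := by
  refine ((isCompact_controlSet hC hA).image_of_continuousOn
    (continuousOn_ham (g := g) hf hℓ0 hℓhat1 p0 p pi lam)).bddAbove.mono ?_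
  rintro _ ⟨w0, w, a, hw0, hw, hsum, ha, rfl⟩
  exact ⟨(w0, w, a), ⟨hw0, hw, hsum, ha⟩, rfl⟩

theorem HpReg.bddAbove_hamValues {Tgt : Set (ℝ × Vec n)} {K : EReal} {Ψ : ℝ → Vec n → ℝ}
    (hReg : HpReg C A f g ℓ0 ℓhat1 Ψ) (hSets : HpSets C A Tgt K)
    (x : Vec n) (p0 : ℝ) (p : Vec n) (pi lam : ℝ) :
    BddAbove (hamValues C A f g ℓ0 ℓhat1 x p0 p pi lam) :=
  _root_.bddAbove_hamValues (hReg.hf_cont.comp (continuous_const.prodMk continuous_id))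
    (hReg.hl0_cont.comp (continuous_const.prodMk continuous_id))
    (hReg.hl1_cont.comp (f := fun z : ℝ × Vec m => (x, z)) (by fun_prop)
      fun _ hz => ⟨mem_univ x, hz⟩)
    hSets.hC_closed hSets.hA p0 p pi lam

theorem Fe_zero_single (x : Vec n) (j : Fin m) (a : Vec q) :
    Fe f g x 0 (EuclideanSpace.single j 1) a = g j x := by
  simp [Fe, PiLp.single_apply, ite_smul]

theorem Fe_zero_neg (x : Vec n) (w : Vec m) (a : Vec q) :
    Fe f g x 0 (-w) a = -Fe f g x 0 w a := by
  simp [Fe, neg_smul]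

theorem inner_Fe_add_le_bigH {p0 : ℝ} {p : Vec n} {pi lam : ℝ} {e : Vec m} {a : Vec q}
    (hbdd : BddAbove (hamValues C A f g ℓ0 ℓhat1 x p0 p pi lam))
    (he : e ∈ C) (he_norm : ‖e‖ = 1) (ha : a ∈ A)
    (hlam : lam * extL ℓ0 ℓhat1 x 0 e a = 0) :
    inner ℝ p (Fe f g x 0 e a) + pi ≤ bigH C A f g ℓ0 ℓhat1 x p0 p pi lam := by
  have hmem : Ham f g ℓ0 ℓhat1 x p0 p pi lam 0 e a ∈ hamValues C A f g ℓ0 ℓhat1 x p0 p pi lam :=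
    ⟨0, e, a, le_rfl, he, by simp [he_norm], ha, rfl⟩
  refine le_of_eq ?_ |>.trans (le_csSup hbdd hmem)
  simp [Ham, he_norm, hlam]

end Extremal

theorem extremal_p_dot_g_eq_zero_general
    {n m₁ m₂ q : ℕ} (C : Set (Vec (m₁ + m₂))) (A : Set (Vec q))
    (f : Vec n → Vec q → Vec n) (g : Fin (m₁ + m₂) → Vec n → Vec n) (xck : Vec n)
    (Tgt : Set (ℝ × Vec n)) (K : EReal) (Ψ : ℝ → Vec n → ℝ)
    (ℓ0 : Vec n → Vec q → ℝ)
    (ℓhat1 : Vec n → ℝ → Vec (m₁ + m₂) → ℝ)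
    (hSets : HpSets C A Tgt K) (hReg : HpReg C A f g ℓ0 ℓhat1 Ψ)
    (hsplit : SplitCone m₁ m₂ C)
    -- the canonical extremal and its multiplier
    (S : ℝ) (w0 : ℝ → ℝ) (w : ℝ → Vec (m₁ + m₂)) (α : ℝ → Vec q)
    (y0 : ℝ → ℝ) (y : ℝ → Vec n) (β : ℝ → ℝ)
    (hproc : IsSTProcess C A f g xck S w0 w α y0 y β)
    (Γ : Set (ℝ × Vec n))
    (p0 : ℝ) (p : ℝ → Vec n) (pi lam : ℝ)
    (hFOMP : FOMP C A f g ℓ0 ℓhat1 Ψ K S w0 w α y0 y β Γ p0 p pi lam)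
    -- the extra hypotheses
    (hpi : pi = 0)
    (hlam : ∀ s ∈ Icc (0:ℝ) S, ∀ i : Fin m₁, ∀ a ∈ A,
      lam * extL ℓ0 ℓhat1 (y s) 0 (EuclideanSpace.single (Fin.castAdd m₂ i) (1:ℝ)) a = 0 ∧
      lam * extL ℓ0 ℓhat1 (y s) 0 (-EuclideanSpace.single (Fin.castAdd m₂ i) (1:ℝ)) a = 0) :
    ∀ s ∈ Icc (0:ℝ) S, ∀ i : Fin m₁,
      (inner ℝ (p s) (g (Fin.castAdd m₂ i) (y s)) : ℝ) = 0 := by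
  intro s hs i
  obtain ⟨t, -, hwt, hαt⟩ := hproc.exists_mem
  have hbdd := hReg.bddAbove_hamValues hSets (y s) p0 (p s) pi lam
  have he : ∀ r : ℝ, r • EuclideanSpace.single (Fin.castAdd m₂ i) (1 : ℝ) ∈ C :=
    hsplit.smul_single_mem ⟨_, hwt⟩ i
  have hle := inner_Fe_add_le_bigH hbdd (by simpa using he 1) (by simp) hαt
    (hlam s hs i _ hαt).1
  have hge := inner_Fe_add_le_bigH hbdd (by simpa using he (-1)) (by simp) hαt
    (hlam s hs i _ hαt).2
  rw [Fe_zero_single] at hle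
  rw [Fe_zero_neg, Fe_zero_single, inner_neg_right] at hge
  have hH := hFOMP.bigH_eq_zero hs
  linarith

/-- Let `(S̄, w̄⁰, w̄, ᾱ, ȳ⁰, ȳ, β̄)` be a canonical extremal with
multiplier `(p₀, p, π, λ)`.  If `π = 0` and `λ ℓᵉ(ȳ(s), 0, ±𝐞ᵢ, a) = 0` for all
`s ∈ [0,S̄]` and `i = 1,…,m₁`, then `p(s)·gᵢ(ȳ(s)) = 0` for all `s ∈ [0,S̄]` and
`i = 1,…,m₁`. -/
theorem extremal_p_dot_g_eq_zero
    {n m₁ m₂ q : ℕ} (C : Set (Vec (m₁ + m₂))) (A : Set (Vec q))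
    (f : Vec n → Vec q → Vec n) (g : Fin (m₁ + m₂) → Vec n → Vec n) (xck : Vec n)
    (Tgt : Set (ℝ × Vec n)) (K : EReal) (Ψ : ℝ → Vec n → ℝ)
    (ℓ0 : Vec n → Vec q → ℝ) (ℓ1 : Vec n → Vec (m₁ + m₂) → ℝ)
    (ℓhat1 : Vec n → ℝ → Vec (m₁ + m₂) → ℝ)
    (hSets : HpSets C A Tgt K) (hReg : HpReg C A f g ℓ0 ℓhat1 Ψ)
    (hrec : IsRecessionOf C ℓhat1 ℓ1) (hsplit : SplitCone m₁ m₂ C)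
    -- the canonical extremal and its multiplier
    (S : ℝ) (w0 : ℝ → ℝ) (w : ℝ → Vec (m₁ + m₂)) (α : ℝ → Vec q)
    (y0 : ℝ → ℝ) (y : ℝ → Vec n) (β : ℝ → ℝ)
    (hproc : IsSTProcess C A f g xck S w0 w α y0 y β)
    (hcan : STCanonical S w0 w)
    (Γ : Set (ℝ × Vec n)) (hΓ : IsBoltyanskiCone Tgt (y0 S, y S) Γ)
    (p0 : ℝ) (p : ℝ → Vec n) (pi lam : ℝ)
    (hFOMP : FOMP C A f g ℓ0 ℓhat1 Ψ K S w0 w α y0 y β Γ p0 p pi lam)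
    -- the extra hypotheses
    (hpi : pi = 0)
    (hlam : ∀ s ∈ Icc (0:ℝ) S, ∀ i : Fin m₁, ∀ a ∈ A,
      lam * extL ℓ0 ℓhat1 (y s) 0 (EuclideanSpace.single (Fin.castAdd m₂ i) (1:ℝ)) a = 0 ∧
      lam * extL ℓ0 ℓhat1 (y s) 0 (-EuclideanSpace.single (Fin.castAdd m₂ i) (1:ℝ)) a = 0) :
    ∀ s ∈ Icc (0:ℝ) S, ∀ i : Fin m₁,
      (inner ℝ (p s) (g (Fin.castAdd m₂ i) (y s)) : ℝ) = 0 :=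
  extremal_p_dot_g_eq_zero_general C A f g xck Tgt K Ψ ℓ0 ℓhat1 hSets hReg hsplit S w0 w α y0 y β
    hproc Γ p0 p pi lam hFOMP hpi hlam
end
end
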